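/- arXiv:2512.06367 — 8 statements merged into one kernel-verified Lean document; each statement's English description precedes it below -/
import Mathlib

section
/- Let G be a connected P10-free graph in which every induced odd cycle has length 7, with no comparable pair of non-adjacent vertices, and let C be an induced 7-cycle in G. Then every vertex of G is at distance at most 3 from C. -/
open SimpleGraph

/-- `c` lists the vertices of an induced cycle of length `n` in `G`:
the map is injective and adjacency holds exactly between consecutive vertices. -/
def IsInducedCycle {V : Type*} (G : SimpleGraph V) (n : ℕ) (c : ZMod n → V) : Prop :=
  Function.Injective c ∧ ∀ i j, G.Adj (c i) (c j) ↔ (i = j + 1 ∨ j = i + 1)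

def HasInducedCycle {V : Type*} (G : SimpleGraph V) (n : ℕ) : Prop :=
  ∃ c : ZMod n → V, IsInducedCycle G n c

/-- `G` contains an induced path on `n` vertices. -/
def HasInducedPath {V : Type*} (G : SimpleGraph V) (n : ℕ) : Prop :=
  ∃ p : Fin n → V, Function.Injective p ∧
    ∀ i j, G.Adj (p i) (p j) ↔ (i.val + 1 = j.val ∨ j.val + 1 = i.val)

/-- no pair of distinct non-adjacent vertices with comparable neighborhoods. -/
def NoComparablePair {V : Type*} (G : SimpleGraph V) : Prop :=
  ∀ u v : V, u ≠ v → ¬ G.Adj u v →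
    ¬ (G.neighborSet u ⊆ G.neighborSet v ∨ G.neighborSet v ⊆ G.neighborSet u)

/-- every induced odd cycle of `G` has length 7. -/
def OddCyclesAre7 {V : Type*} (G : SimpleGraph V) : Prop :=
  ∀ n : ℕ, 3 ≤ n → Odd n → HasInducedCycle G n → n = 7

/-- distance from a vertex to an (induced) 7-cycle given by `c`. -/
noncomputable def distToCycle {V : Type*} (G : SimpleGraph V) (c : ZMod 7 → V) (x : V) : ℕ :=
  sInf {d : ℕ | ∃ i : ZMod 7, G.dist x (c i) = d}

/-- `A_i`: vertices whose neighborhood on the cycle is exactly `{c i}`. -/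
def Aset {V : Type*} (G : SimpleGraph V) (c : ZMod 7 → V) (i : ZMod 7) : Set V :=
  {x | G.neighborSet x ∩ Set.range c = {c i}}

/-- `B_i`: vertices whose neighborhood on the cycle is exactly `{c (i-1), c (i+1)}`. -/
def Bset {V : Type*} (G : SimpleGraph V) (c : ZMod 7 → V) (i : ZMod 7) : Set V :=
  {x | G.neighborSet x ∩ Set.range c = {c (i - 1), c (i + 1)}}

/-- the closed neighborhood `N[C]` of the cycle. -/
def closedNbhd {V : Type*} (G : SimpleGraph V) (c : ZMod 7 → V) : Set V :=
  Set.range c ∪ {x | ∃ i : ZMod 7, G.Adj x (c i)}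

/-!
Suppose some vertex is at distance at least 4 from `C`. Descending along shortest paths gives a
path `v₄ v₃ v₂ v₁` with `vₖ` at distance `k` from `C`; distances change by at most one along an
edge, so this path is induced and only `v₁` has neighbours on `C`. As `G` has no induced `C₃`
or `C₅`, the neighbours of `v₁` on `C` are pairwise at distance 2 along `C`, hence `v₁` has a
neighbour `c a` with none of `c (a + 1), …, c (a + 4)` adjacent to it. Since `v₄` and `v₂` are
not adjacent, `N(v₄) ⊄ N(v₂)` yields a neighbour `y` of `v₄` missing `v₂`; it is at distance at
least 3 from `C` and misses `v₃` (no triangle), so `y v₄ v₃ v₂ v₁ c a … c (a + 4)` is an induced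
`P₁₀`.
-/

section InducedPaths

variable {V : Type*} {G : SimpleGraph V}

def IsInducedPath (G : SimpleGraph V) {n : ℕ} (p : Fin n → V) : Prop :=
  Function.Injective p ∧ ∀ i j, G.Adj (p i) (p j) ↔ (i.val + 1 = j.val ∨ j.val + 1 = i.val)

theorem IsInducedPath.hasInducedPath {n : ℕ} {p : Fin n → V} (hp : IsInducedPath G p) :
    HasInducedPath G n :=
  ⟨p, hp⟩

theorem IsInducedPath.cons {n : ℕ} {p : Fin (n + 3) → V} (hp : IsInducedPath G p) {u : V}
    (hu : G.Adj u (p 0)) (hfar : ∀ j : Fin (n + 2), ¬ G.Adj u (p j.succ)) :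
    IsInducedPath G (Fin.cons u p : Fin (n + 4) → V) := by
  have hadj : ∀ j, G.Adj u (p j) ↔ (j : ℕ) = 0 := fun j =>
    Fin.cases (iff_of_true hu rfl) (fun j => iff_of_false (hfar j) (by simp)) j
  refine ⟨Fin.cons_injective_iff.2 ⟨?_, hp.1⟩, fun i j => ?_⟩
  · -- `u = p j` forces `j = 1`, but `p 1` is adjacent to `p 2`
    rintro ⟨j, rfl⟩
    have hj : (j : ℕ) = 1 := by have := (hp.2 j 0).1 hu; rw [Fin.val_zero] at this; omega
    exact hfar ⟨1, by omega⟩ ((hp.2 j ⟨2, by omega⟩).2 (by simp [hj]))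
  · induction i using Fin.cases <;> induction j using Fin.cases <;>
      simp [hadj, (hp.2 _ _).symm, G.adj_comm _ u]

end InducedPaths

section InducedCycles

variable {V : Type*} {G : SimpleGraph V}

/-- Injectivity is automatic: if `c i = c j` then `{i - 1, i + 1} = {j - 1, j + 1}`, which forces
`i = j` once `4 ≠ 0`. -/
theorem isInducedCycle_of_adj_iff {n : ℕ} {c : ZMod n → V} (h4 : (4 : ZMod n) ≠ 0)
    (hadj : ∀ i j, G.Adj (c i) (c j) ↔ (i = j + 1 ∨ j = i + 1)) : IsInducedCycle G n c := by
  refine ⟨fun i j hij => ?_, hadj⟩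
  have hi : G.Adj (c i) (c (j + 1)) := hij ▸ (hadj j (j + 1)).2 (Or.inr rfl)
  have hi' : G.Adj (c (j - 1)) (c i) := hij ▸ (hadj (j - 1) j).2 (Or.inr (by ring))
  rcases (hadj _ _).1 hi with h | h
  · rcases (hadj _ _).1 hi' with h' | h'
    · exact absurd (by linear_combination -h - h') h4
    · linear_combination h'
  · linear_combination -h

theorem hasInducedCycle_three {a b d : V} (hab : G.Adj a b) (hbd : G.Adj b d)
    (hda : G.Adj d a) : HasInducedCycle G 3 := by
  refine ⟨![a, b, d], isInducedCycle_of_adj_iff (by decide) fun i j => ?_⟩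
  have h3 : ∀ t : ZMod 3, t = 0 ∨ t = 1 ∨ t = 2 := by decide
  rcases h3 i with rfl | rfl | rfl <;> rcases h3 j with rfl | rfl | rfl <;>
    simp +decide [hab, hbd, hda, hab.symm, hbd.symm, hda.symm]

theorem hasInducedCycle_five {a b d e f : V} (hab : G.Adj a b) (hbd : G.Adj b d)
    (hde : G.Adj d e) (hef : G.Adj e f) (hfa : G.Adj f a) (had : ¬ G.Adj a d)
    (hae : ¬ G.Adj a e) (hbe : ¬ G.Adj b e) (hbf : ¬ G.Adj b f) (hdf : ¬ G.Adj d f) :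
    HasInducedCycle G 5 := by
  refine ⟨![a, b, d, e, f], isInducedCycle_of_adj_iff (by decide) fun i j => ?_⟩
  have h5 : ∀ t : ZMod 5, t = 0 ∨ t = 1 ∨ t = 2 ∨ t = 3 ∨ t = 4 := by decide
  rcases h5 i with rfl | rfl | rfl | rfl | rfl <;> rcases h5 j with rfl | rfl | rfl | rfl | rfl <;>
    simp +decide [hab, hbd, hde, hef, hfa, hab.symm, hbd.symm, hde.symm, hef.symm, hfa.symm,
      had, hae, hbe, hbf, hdf, G.adj_comm d a, G.adj_comm e a, G.adj_comm e b, G.adj_comm f b,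
      G.adj_comm f d]

theorem IsInducedCycle.comp_add {n : ℕ} {c : ZMod n → V} (hc : IsInducedCycle G n c)
    (k : ZMod n) : IsInducedCycle G n (fun t => c (k + t)) :=
  ⟨hc.1.comp (add_right_injective k), fun i j => by simp only [hc.2, add_assoc, add_right_inj]⟩

theorem IsInducedCycle.isInducedPath_arc {n m : ℕ} {c : ZMod n → V} (hc : IsInducedCycle G n c)
    (hmn : m < n) (a : ZMod n) : IsInducedPath G (fun t : Fin m => c (a + (t : ℕ))) := by
  have hcast : ∀ s t : ℕ, s < n → t < n → ((s : ZMod n) = t ↔ s = t) := fun s t hs ht => by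
    rw [ZMod.natCast_eq_natCast_iff', Nat.mod_eq_of_lt hs, Nat.mod_eq_of_lt ht]
  refine ⟨fun s t hst => Fin.ext ((hcast _ _ (by omega) (by omega)).1
    (add_left_cancel (hc.1 hst))), fun s t => ?_⟩
  simp only [hc.2, add_assoc, add_right_inj, ← Nat.cast_succ]
  rw [hcast _ _ (by omega) (by omega), hcast _ _ (by omega) (by omega)]
  omega

end InducedCycles

theorem ZMod.exists_next_four_not {m : ZMod 7 → Prop} (h1 : ∀ k, m k → ¬ m (k + 1))
    (h3 : ∀ k, m k → ¬ m (k + 3)) {i : ZMod 7} (hi : m i) :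
    ∃ a, m a ∧ ¬ m (a + 1) ∧ ¬ m (a + 2) ∧ ¬ m (a + 3) ∧ ¬ m (a + 4) := by
  have h4 : ∀ k, m k → ¬ m (k + 4) := fun k hk hk4 =>
    h3 _ hk4 (by rwa [add_assoc, add_eq_left.2 (by decide)])
  have h6 : ∀ k, m k → ¬ m (k + 6) := fun k hk hk6 =>
    h1 _ hk6 (by rwa [add_assoc, add_eq_left.2 (by decide)])
  by_cases hi2 : m (i + 2)
  · refine ⟨i + 2, hi2, h1 _ hi2, ?_, h3 _ hi2, ?_⟩
    · rw [add_assoc]; exact h4 i hi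
    · rw [add_assoc]; exact h6 i hi
  · exact ⟨i, hi, h1 i hi, hi2, h3 i hi, h4 i hi⟩

section OddCycles

variable {V : Type*} {G : SimpleGraph V}

theorem OddCyclesAre7.not_adj_of_adj_of_adj (hodd : OddCyclesAre7 G) {a b d : V}
    (hab : G.Adj a b) (hbd : G.Adj b d) : ¬ G.Adj a d := fun had =>
  absurd (hodd 3 le_rfl (by decide) (hasInducedCycle_three hab hbd had.symm)) (by norm_num)

theorem OddCyclesAre7.not_adj_add_three (hodd : OddCyclesAre7 G) {c : ZMod 7 → V}
    (hc : IsInducedCycle G 7 c) {v : V} {k : ZMod 7} (hk : G.Adj v (c k)) :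
    ¬ G.Adj v (c (k + 3)) := by
  intro hk3
  have hd := (hc.comp_add k).2
  have hk' : G.Adj v (c (k + 0)) := by rwa [add_zero]
  have hk1 : ¬ G.Adj v (c (k + 1)) := hodd.not_adj_of_adj_of_adj hk' ((hd 0 1).2 (by decide))
  have hk2 : ¬ G.Adj v (c (k + 2)) := hodd.not_adj_of_adj_of_adj hk3 ((hd 3 2).2 (by decide))
  have hC5 := hasInducedCycle_five hk' ((hd 0 1).2 (by decide)) ((hd 1 2).2 (by decide))
    ((hd 2 3).2 (by decide)) hk3.symm hk1 hk2 (by rw [hd]; decide) (by rw [hd]; decide)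
    (by rw [hd]; decide)
  exact absurd (hodd 5 (by norm_num) (by decide) hC5) (by norm_num)

theorem OddCyclesAre7.exists_adj_not_adj_next_four (hodd : OddCyclesAre7 G) {c : ZMod 7 → V}
    (hc : IsInducedCycle G 7 c) {v : V} {i : ZMod 7} (hi : G.Adj v (c i)) :
    ∃ a, G.Adj v (c a) ∧ ∀ t : ℕ, 1 ≤ t → t ≤ 4 → ¬ G.Adj v (c (a + t)) := by
  obtain ⟨a, ha, ha1, ha2, ha3, ha4⟩ := ZMod.exists_next_four_not (m := fun k => G.Adj v (c k))
    (fun k hk hk1 => hodd.not_adj_of_adj_of_adj hk ((hc.2 _ _).2 (Or.inr rfl)) hk1)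
    (fun k => hodd.not_adj_add_three hc) hi
  refine ⟨a, ha, fun t ht1 ht4 => ?_⟩
  interval_cases t <;> simpa

end OddCycles

theorem NoComparablePair.exists_adj_not_adj {V : Type*} {G : SimpleGraph V}
    (hcomp : NoComparablePair G) {u v : V} (hne : u ≠ v) (hnadj : ¬ G.Adj u v) :
    ∃ w, G.Adj u w ∧ ¬ G.Adj v w :=
  Set.not_subset.1 (not_or.1 (hcomp u v hne hnadj)).1

section distToCycle

variable {V : Type*} {G : SimpleGraph V} {c : ZMod 7 → V}

variable (G c) in
theorem distToCycle_le_dist (x : V) (i : ZMod 7) : distToCycle G c x ≤ G.dist x (c i) :=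
  Nat.sInf_le ⟨i, rfl⟩

variable (G c) in
theorem exists_dist_eq_distToCycle (x : V) : ∃ i, G.dist x (c i) = distToCycle G c x :=
  Nat.sInf_mem (s := {d | ∃ i, G.dist x (c i) = d}) ⟨_, 0, rfl⟩

theorem distToCycle_apply_self (i : ZMod 7) : distToCycle G c (c i) = 0 :=
  Nat.le_zero.1 ((distToCycle_le_dist G c _ i).trans_eq dist_self)

theorem distToCycle_le_of_adj {u w : V} (h : G.Adj u w) :
    distToCycle G c u ≤ distToCycle G c w + 1 := by
  obtain ⟨i, hi⟩ := exists_dist_eq_distToCycle G c w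
  have hu := distToCycle_le_dist G c u i
  have hui : G.dist (c i) u ≤ G.dist (c i) w + 1 := by
    rcases h.symm.diff_dist_adj (u := c i) with h' | h' | h' <;> omega
  rw [dist_comm, dist_comm (u := c i), hi] at hui
  omega

theorem not_adj_of_distToCycle_add_two_le {u w : V}
    (h : distToCycle G c w + 2 ≤ distToCycle G c u) : ¬ G.Adj u w := fun huw => by
  have := distToCycle_le_of_adj (c := c) huw
  omega

theorem exists_adj_distToCycle_eq {x : V} {k : ℕ} (h : distToCycle G c x = k + 1) :
    ∃ w, G.Adj x w ∧ distToCycle G c w = k := by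
  obtain ⟨i, hi⟩ := exists_dist_eq_distToCycle G c x
  have hr : G.Reachable x (c i) := Reachable.of_dist_ne_zero (by omega)
  obtain ⟨p, hp⟩ := hr.exists_walk_length_eq_dist
  cases p with
  | nil => simp [← hi] at h
  | @cons _ w _ hxw p =>
    have hw := (distToCycle_le_dist G c w i).trans (dist_le p)
    have := distToCycle_le_of_adj (c := c) hxw
    simp only [Walk.length_cons] at hp
    exact ⟨w, hxw, by omega⟩

theorem exists_distToCycle_eq_of_le {x : V} {k : ℕ} (h : k ≤ distToCycle G c x) :
    ∃ w, distToCycle G c w = k := by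
  obtain ⟨n, hn⟩ := Nat.exists_eq_add_of_le h
  induction n generalizing x with
  | zero => exact ⟨x, hn⟩
  | succ n ih =>
    obtain ⟨w, -, hw⟩ := exists_adj_distToCycle_eq (k := k + n) (by omega)
    exact ih (by omega) hw

theorem exists_adj_of_distToCycle_eq_one {v : V} (h : distToCycle G c v = 1) :
    ∃ i, G.Adj v (c i) := by
  obtain ⟨i, hi⟩ := exists_dist_eq_distToCycle G c v
  exact ⟨i, dist_eq_one_iff_adj.1 (hi.trans h)⟩

end distToCycle

theorem stmt3_general {V : Type*} (G : SimpleGraph V)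
    (hP : ¬ HasInducedPath G 10)
    (hodd : OddCyclesAre7 G) (hcomp : NoComparablePair G)
    (c : ZMod 7 → V) (hc : IsInducedCycle G 7 c) :
    ∀ x : V, distToCycle G c x ≤ 3 := by
  intro x
  by_contra! hx
  obtain ⟨v4, h4⟩ := exists_distToCycle_eq_of_le (show 4 ≤ distToCycle G c x by omega)
  obtain ⟨v3, h43, h3⟩ := exists_adj_distToCycle_eq (k := 3) h4
  obtain ⟨v2, h32, h2⟩ := exists_adj_distToCycle_eq (k := 2) h3
  obtain ⟨v1, h21, h1⟩ := exists_adj_distToCycle_eq (k := 1) h2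
  obtain ⟨i, h1i⟩ := exists_adj_of_distToCycle_eq_one h1
  obtain ⟨a, h1a, h1far⟩ := hodd.exists_adj_not_adj_next_four hc h1i
  have far {u w : V} (h : distToCycle G c w + 2 ≤ distToCycle G c u) : ¬ G.Adj u w :=
    not_adj_of_distToCycle_add_two_le h
  have arc_far {u : V} (hu : 2 ≤ distToCycle G c u) (t : ℕ) : ¬ G.Adj u (c (a + t)) :=
    far (by rw [distToCycle_apply_self]; omega)
  obtain ⟨y, h4y, h2y⟩ := hcomp.exists_adj_not_adj (u := v4) (v := v2)
    (ne_of_apply_ne (distToCycle G c) (by omega)) (far (by omega))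
  have hy : 3 ≤ distToCycle G c y := by have := distToCycle_le_of_adj (c := c) h4y; omega
  have P5 := hc.isInducedPath_arc (m := 5) (by norm_num) a
  have P6 := P5.cons (u := v1) (by simpa using h1a) fun j => h1far _ (Nat.succ_pos _) j.is_lt
  have P7 := P6.cons (u := v2) h21 fun j => arc_far (by omega) _
  have P8 := P7.cons (u := v3) h32 <|
    Fin.cases (far (w := v1) (by omega)) fun j => arc_far (by omega) _
  have P9 := P8.cons (u := v4) h43 <|
    Fin.cases (far (w := v2) (by omega)) <| Fin.cases (far (w := v1) (by omega)) fun j =>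
      arc_far (by omega) _
  refine hP (P9.cons (u := y) h4y.symm ?_).hasInducedPath
  exact Fin.cases (hodd.not_adj_of_adj_of_adj h4y.symm h43) <| Fin.cases (fun h => h2y h.symm) <|
    Fin.cases (far (w := v1) (by omega)) fun j => arc_far (by omega) _

theorem stmt3 {V : Type*} [Fintype V] (G : SimpleGraph V)
    (hconn : G.Connected) (hP : ¬ HasInducedPath G 10)
    (hodd : OddCyclesAre7 G) (hcomp : NoComparablePair G)
    (c : ZMod 7 → V) (hc : IsInducedCycle G 7 c) :
    ∀ x : V, distToCycle G c x ≤ 3 :=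
  stmt3_general G hP hodd hcomp c hc
end

section
/- Let G be a connected P10-free graph in which every induced odd cycle has length 7, with no comparable pair, and C an induced 7-cycle. Then the set D2 of vertices at distance exactly 3 from C is an independent set. -/
open SimpleGraph

lemma tri_free' {V : Type*} {G : SimpleGraph V} (hodd : OddCyclesAre7 G)
    {a b d : V} (hab : G.Adj a b) (hbd : G.Adj b d) (had : G.Adj a d) : False := by
  classical
  have h3 : HasInducedCycle G 3 := by
    have hfin : ∀ i : ZMod 3, i = 0 ∨ i = 1 ∨ i = 2 := by decide
    obtain ⟨F, hF0, hF1, hF2⟩ : ∃ F : ZMod 3 → V, F 0 = a ∧ F 1 = b ∧ F 2 = d :=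
      ⟨fun i => if i = 0 then a else if i = 1 then b else d, rfl, rfl, rfl⟩
    refine ⟨F, ?_, ?_⟩
    · intro i j hij
      rcases hfin i with rfl | rfl | rfl <;> rcases hfin j with rfl | rfl | rfl <;>
        simp only [hF0, hF1, hF2] at hij <;>
        first
          | rfl
          | exact absurd hij (G.ne_of_adj hab)
          | exact absurd hij (G.ne_of_adj hab).symm
          | exact absurd hij (G.ne_of_adj hbd)
          | exact absurd hij (G.ne_of_adj hbd).symm
          | exact absurd hij (G.ne_of_adj had)
          | exact absurd hij (G.ne_of_adj had).symm
    · intro i j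
      rcases hfin i with rfl | rfl | rfl <;> rcases hfin j with rfl | rfl | rfl <;>
        simp only [hF0, hF1, hF2] <;>
        first
          | exact iff_of_false (G.irrefl) (by decide)
          | exact iff_of_true hab (by decide)
          | exact iff_of_true hab.symm (by decide)
          | exact iff_of_true hbd (by decide)
          | exact iff_of_true hbd.symm (by decide)
          | exact iff_of_true had (by decide)
          | exact iff_of_true had.symm (by decide)
  exact absurd (hodd 3 (by norm_num) ⟨1, by norm_num⟩ h3) (by norm_num)

lemma c5_free' {V : Type*} {G : SimpleGraph V} (hodd : OddCyclesAre7 G)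
    {a b d e f : V}
    (hab : G.Adj a b) (hbd : G.Adj b d) (hde : G.Adj d e) (hef : G.Adj e f) (hfa : G.Adj f a)
    (nad : ¬ G.Adj a d) (nae : ¬ G.Adj a e) (nbe : ¬ G.Adj b e) (nbf : ¬ G.Adj b f)
    (ndf : ¬ G.Adj d f) : False := by
  classical
  have nead : a ≠ d := by rintro rfl; exact nae hde
  have neae : a ≠ e := by rintro rfl; exact nad hde.symm
  have nebe : b ≠ e := by rintro rfl; exact nbf hef
  have nebf : b ≠ f := by rintro rfl; exact nbe hef.symm
  have nedf : d ≠ f := by rintro rfl; exact nad hfa.symm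
  have h5 : HasInducedCycle G 5 := by
    have hfin : ∀ i : ZMod 5, i = 0 ∨ i = 1 ∨ i = 2 ∨ i = 3 ∨ i = 4 := by decide
    obtain ⟨F, hF0, hF1, hF2, hF3, hF4⟩ :
        ∃ F : ZMod 5 → V, F 0 = a ∧ F 1 = b ∧ F 2 = d ∧ F 3 = e ∧ F 4 = f :=
      ⟨fun i => if i = 0 then a else if i = 1 then b else if i = 2 then d else
        if i = 3 then e else f, rfl, rfl, rfl, rfl, rfl⟩
    refine ⟨F, ?_, ?_⟩
    · intro i j hij
      rcases hfin i with rfl | rfl | rfl | rfl | rfl <;>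
        rcases hfin j with rfl | rfl | rfl | rfl | rfl <;>
        simp only [hF0, hF1, hF2, hF3, hF4] at hij <;>
        first
          | rfl
          | exact absurd hij (G.ne_of_adj hab)
          | exact absurd hij (G.ne_of_adj hab).symm
          | exact absurd hij (G.ne_of_adj hbd)
          | exact absurd hij (G.ne_of_adj hbd).symm
          | exact absurd hij (G.ne_of_adj hde)
          | exact absurd hij (G.ne_of_adj hde).symm
          | exact absurd hij (G.ne_of_adj hef)
          | exact absurd hij (G.ne_of_adj hef).symm
          | exact absurd hij (G.ne_of_adj hfa)
          | exact absurd hij (G.ne_of_adj hfa).symm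
          | exact absurd hij nead
          | exact absurd hij nead.symm
          | exact absurd hij neae
          | exact absurd hij neae.symm
          | exact absurd hij nebe
          | exact absurd hij nebe.symm
          | exact absurd hij nebf
          | exact absurd hij nebf.symm
          | exact absurd hij nedf
          | exact absurd hij nedf.symm
    · intro i j
      rcases hfin i with rfl | rfl | rfl | rfl | rfl <;>
        rcases hfin j with rfl | rfl | rfl | rfl | rfl <;>
        simp only [hF0, hF1, hF2, hF3, hF4] <;>
        first
          | exact iff_of_false (G.irrefl) (by decide)
          | exact iff_of_true hab (by decide)
          | exact iff_of_true hab.symm (by decide)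
          | exact iff_of_true hbd (by decide)
          | exact iff_of_true hbd.symm (by decide)
          | exact iff_of_true hde (by decide)
          | exact iff_of_true hde.symm (by decide)
          | exact iff_of_true hef (by decide)
          | exact iff_of_true hef.symm (by decide)
          | exact iff_of_true hfa (by decide)
          | exact iff_of_true hfa.symm (by decide)
          | exact iff_of_false nad (by decide)
          | exact iff_of_false (fun h => nad h.symm) (by decide)
          | exact iff_of_false nae (by decide)
          | exact iff_of_false (fun h => nae h.symm) (by decide)
          | exact iff_of_false nbe (by decide)
          | exact iff_of_false (fun h => nbe h.symm) (by decide)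
          | exact iff_of_false nbf (by decide)
          | exact iff_of_false (fun h => nbf h.symm) (by decide)
          | exact iff_of_false ndf (by decide)
          | exact iff_of_false (fun h => ndf h.symm) (by decide)
  exact absurd (hodd 5 (by norm_num) ⟨2, by norm_num⟩ h5) (by norm_num)

lemma walk3' {V : Type*} {G : SimpleGraph V} {u v : V} (w : G.Walk u v) (h : w.length = 3) :
    ∃ a b : V, G.Adj u a ∧ G.Adj a b ∧ G.Adj b v := by
  cases w with
  | nil => simp at h
  | cons h1 w1 =>
    cases w1 with
    | nil => simp at h
    | cons h2 w2 =>
      cases w2 with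
      | nil => simp at h
      | cons h3 w3 =>
        cases w3 with
        | nil => exact ⟨_, _, h1, h2, h3⟩
        | cons h4 w4 =>
          simp only [SimpleGraph.Walk.length_cons] at h
          omega

set_option maxHeartbeats 2000000 in
lemma build_p10 {V : Type*} {G : SimpleGraph V}
    (c : ZMod 7 → V) (hc : IsInducedCycle G 7 c)
    (z y x p q : V) (i0 s : ZMod 7) (hs : s = 1 ∨ s = 6)
    (ezy : G.Adj z y) (eyx : G.Adj y x) (exp : G.Adj x p) (epq : G.Adj p q)
    (eqc : G.Adj q (c (i0 + 0 * s)))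
    (nzx : ¬ G.Adj z x) (nzp : ¬ G.Adj z p) (nzq : ¬ G.Adj z q)
    (nyp : ¬ G.Adj y p) (nyq : ¬ G.Adj y q) (nxq : ¬ G.Adj x q)
    (nzc : ∀ k, ¬ G.Adj z (c k)) (nyc : ∀ k, ¬ G.Adj y (c k))
    (nxc : ∀ k, ¬ G.Adj x (c k)) (npc : ∀ k, ¬ G.Adj p (c k))
    (nq1 : ¬ G.Adj q (c (i0 + 1 * s))) (nq2 : ¬ G.Adj q (c (i0 + 2 * s)))
    (nq3 : ¬ G.Adj q (c (i0 + 3 * s))) (nq4 : ¬ G.Adj q (c (i0 + 4 * s)))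
    (nezx : z ≠ x) (nezp : z ≠ p) (nezq : z ≠ q)
    (neyp : y ≠ p) (neyq : y ≠ q) (nexq : x ≠ q)
    (nezc : ∀ k, z ≠ c k) (neyc : ∀ k, y ≠ c k)
    (nexc : ∀ k, x ≠ c k) (nepc : ∀ k, p ≠ c k) (neqc : ∀ k, q ≠ c k) :
    HasInducedPath G 10 := by
  have hccadj : ∀ a b : ZMod 7, (a = b + 1 ∨ b = a + 1) → G.Adj (c (i0 + a)) (c (i0 + b)) := by
    intro a b h
    refine (hc.2 _ _).mpr ?_
    rcases h with rfl | rfl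
    · exact Or.inl (by ring)
    · exact Or.inr (by ring)
  have hccnon : ∀ a b : ZMod 7, ¬(a = b + 1 ∨ b = a + 1) → ¬ G.Adj (c (i0 + a)) (c (i0 + b)) := by
    intro a b h hadj
    rcases (hc.2 _ _).mp hadj with h' | h'
    · exact h (Or.inl (add_left_cancel (h'.trans (add_assoc i0 b 1))))
    · exact h (Or.inr (add_left_cancel (h'.trans (add_assoc i0 a 1))))
  have hccne : ∀ a b : ZMod 7, a ≠ b → c (i0 + a) ≠ c (i0 + b) := by
    intro a b h h'
    exact h (add_left_cancel (hc.1 h'))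
  have hfin : ∀ i : Fin 10, i = 0 ∨ i = 1 ∨ i = 2 ∨ i = 3 ∨ i = 4 ∨ i = 5 ∨ i = 6 ∨ i = 7 ∨
      i = 8 ∨ i = 9 := by decide
  obtain ⟨F, hF0, hF1, hF2, hF3, hF4, hF5, hF6, hF7, hF8, hF9⟩ :
      ∃ F : Fin 10 → V, F 0 = z ∧ F 1 = y ∧ F 2 = x ∧ F 3 = p ∧ F 4 = q ∧
        F 5 = c (i0 + 0 * s) ∧ F 6 = c (i0 + 1 * s) ∧ F 7 = c (i0 + 2 * s) ∧
        F 8 = c (i0 + 3 * s) ∧ F 9 = c (i0 + 4 * s) :=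
    ⟨fun i : Fin 10 =>
      if i = 0 then z else if i = 1 then y else if i = 2 then x else if i = 3 then p else
      if i = 4 then q else if i = 5 then c (i0 + 0 * s) else if i = 6 then c (i0 + 1 * s) else
      if i = 7 then c (i0 + 2 * s) else if i = 8 then c (i0 + 3 * s) else c (i0 + 4 * s),
      rfl, rfl, rfl, rfl, rfl, rfl, rfl, rfl, rfl, rfl⟩
  refine ⟨F, ?_, ?_⟩
  · intro i j hij
    rcases hfin i with rfl|rfl|rfl|rfl|rfl|rfl|rfl|rfl|rfl|rfl <;>
      rcases hfin j with rfl|rfl|rfl|rfl|rfl|rfl|rfl|rfl|rfl|rfl <;>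
      simp only [hF0, hF1, hF2, hF3, hF4, hF5, hF6, hF7, hF8, hF9] at hij ⊢ <;>
      first
        | rfl
        | exact absurd hij (G.ne_of_adj ezy)
        | exact absurd hij (G.ne_of_adj ezy).symm
        | exact absurd hij (G.ne_of_adj eyx)
        | exact absurd hij (G.ne_of_adj eyx).symm
        | exact absurd hij (G.ne_of_adj exp)
        | exact absurd hij (G.ne_of_adj exp).symm
        | exact absurd hij (G.ne_of_adj epq)
        | exact absurd hij (G.ne_of_adj epq).symm
        | exact absurd hij nezx
        | exact absurd hij nezx.symm
        | exact absurd hij nezp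
        | exact absurd hij nezp.symm
        | exact absurd hij nezq
        | exact absurd hij nezq.symm
        | exact absurd hij neyp
        | exact absurd hij neyp.symm
        | exact absurd hij neyq
        | exact absurd hij neyq.symm
        | exact absurd hij nexq
        | exact absurd hij nexq.symm
        | exact absurd hij (nezc _)
        | exact absurd hij (nezc _).symm
        | exact absurd hij (neyc _)
        | exact absurd hij (neyc _).symm
        | exact absurd hij (nexc _)
        | exact absurd hij (nexc _).symm
        | exact absurd hij (nepc _)
        | exact absurd hij (nepc _).symm
        | exact absurd hij (neqc _)
        | exact absurd hij (neqc _).symm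
        | exact absurd hij (hccne _ _ (by rcases hs with rfl | rfl <;> decide))
  · intro i j
    rcases hfin i with rfl|rfl|rfl|rfl|rfl|rfl|rfl|rfl|rfl|rfl <;>
      rcases hfin j with rfl|rfl|rfl|rfl|rfl|rfl|rfl|rfl|rfl|rfl <;>
      simp only [hF0, hF1, hF2, hF3, hF4, hF5, hF6, hF7, hF8, hF9] <;>
      first
        | exact iff_of_false (G.irrefl) (by decide)
        | exact iff_of_true ezy (by decide)
        | exact iff_of_true ezy.symm (by decide)
        | exact iff_of_true eyx (by decide)
        | exact iff_of_true eyx.symm (by decide)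
        | exact iff_of_true exp (by decide)
        | exact iff_of_true exp.symm (by decide)
        | exact iff_of_true epq (by decide)
        | exact iff_of_true epq.symm (by decide)
        | exact iff_of_true eqc (by decide)
        | exact iff_of_true eqc.symm (by decide)
        | exact iff_of_true (hccadj _ _ (by rcases hs with rfl | rfl <;> decide)) (by decide)
        | exact iff_of_false nzx (by decide)
        | exact iff_of_false (fun h => nzx h.symm) (by decide)
        | exact iff_of_false nzp (by decide)
        | exact iff_of_false (fun h => nzp h.symm) (by decide)
        | exact iff_of_false nzq (by decide)
        | exact iff_of_false (fun h => nzq h.symm) (by decide)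
        | exact iff_of_false nyp (by decide)
        | exact iff_of_false (fun h => nyp h.symm) (by decide)
        | exact iff_of_false nyq (by decide)
        | exact iff_of_false (fun h => nyq h.symm) (by decide)
        | exact iff_of_false nxq (by decide)
        | exact iff_of_false (fun h => nxq h.symm) (by decide)
        | exact iff_of_false (nzc _) (by decide)
        | exact iff_of_false (fun h => nzc _ h.symm) (by decide)
        | exact iff_of_false (nyc _) (by decide)
        | exact iff_of_false (fun h => nyc _ h.symm) (by decide)
        | exact iff_of_false (nxc _) (by decide)
        | exact iff_of_false (fun h => nxc _ h.symm) (by decide)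
        | exact iff_of_false (npc _) (by decide)
        | exact iff_of_false (fun h => npc _ h.symm) (by decide)
        | exact iff_of_false nq1 (by decide)
        | exact iff_of_false (fun h => nq1 h.symm) (by decide)
        | exact iff_of_false nq2 (by decide)
        | exact iff_of_false (fun h => nq2 h.symm) (by decide)
        | exact iff_of_false nq3 (by decide)
        | exact iff_of_false (fun h => nq3 h.symm) (by decide)
        | exact iff_of_false nq4 (by decide)
        | exact iff_of_false (fun h => nq4 h.symm) (by decide)
        | exact iff_of_false (hccnon _ _ (by rcases hs with rfl | rfl <;> decide)) (by decide)

set_option maxHeartbeats 1000000 in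
theorem stmt4 {V : Type*} [Fintype V] (G : SimpleGraph V)
    (hconn : G.Connected) (hP : ¬ HasInducedPath G 10)
    (hodd : OddCyclesAre7 G) (hcomp : NoComparablePair G)
    (c : ZMod 7 → V) (hc : IsInducedCycle G 7 c) :
    ∀ x y : V, distToCycle G c x = 3 → distToCycle G c y = 3 → ¬ G.Adj x y := by
  intro x y hx hy hxy
  classical
  have hx' : sInf {d : ℕ | ∃ i : ZMod 7, G.dist x (c i) = d} = 3 := hx
  have hy' : sInf {d : ℕ | ∃ i : ZMod 7, G.dist y (c i) = d} = 3 := hy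
  have hxlow : ∀ k, 3 ≤ G.dist x (c k) := fun k => hx' ▸ Nat.sInf_le ⟨k, rfl⟩
  have hylow : ∀ k, 3 ≤ G.dist y (c k) := fun k => hy' ▸ Nat.sInf_le ⟨k, rfl⟩
  have hxmem : ∃ i : ZMod 7, G.dist x (c i) = 3 := by
    rw [← hx']
    have hne : {d : ℕ | ∃ i : ZMod 7, G.dist x (c i) = d}.Nonempty := ⟨G.dist x (c 0), 0, rfl⟩
    exact Nat.sInf_mem hne
  obtain ⟨i0, hi0⟩ := hxmem
  obtain ⟨w, hw⟩ := hconn.exists_walk_length_eq_dist x (c i0)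
  rw [hi0] at hw
  obtain ⟨p, q, hxp, hpq, hqc⟩ := walk3' w hw
  have adj1 : ∀ {u v : V}, G.Adj u v → G.dist u v ≤ 1 := by
    intro u v h
    simpa using G.dist_le (SimpleGraph.Walk.cons h SimpleGraph.Walk.nil)
  have tri : ∀ u v w : V, G.dist u w ≤ G.dist u v + G.dist v w :=
    fun u v w => hconn.dist_triangle
  have dxp : G.dist x p ≤ 1 := adj1 hxp
  have dpq : G.dist p q ≤ 1 := adj1 hpq
  have dq : G.dist q (c i0) ≤ 1 := adj1 hqc
  have dxq : G.dist x q ≤ 2 := le_trans (tri x p q) (by omega)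
  have dp : G.dist p (c i0) ≤ 2 := le_trans (tri p q (c i0)) (by omega)
  -- basic non-adjacencies
  have nxc : ∀ k, ¬ G.Adj x (c k) := fun k h => by
    have h1 := adj1 h; have h2 := hxlow k; omega
  have nyc : ∀ k, ¬ G.Adj y (c k) := fun k h => by
    have h1 := adj1 h; have h2 := hylow k; omega
  have npc : ∀ k, ¬ G.Adj p (c k) := fun k h => by
    have h1 := tri x p (c k); have h2 := adj1 h; have h3 := hxlow k; omega
  have nxq : ¬ G.Adj x q := fun h => by
    have h1 := tri x q (c i0); have h2 := adj1 h; have h3 := hxlow i0; omega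
  have nyq : ¬ G.Adj y q := fun h => by
    have h1 := tri y q (c i0); have h2 := adj1 h; have h3 := hylow i0; omega
  have nyp : ¬ G.Adj y p := fun h => tri_free' hodd hxy h hxp
  have neyp : y ≠ p := by
    rintro rfl
    have h1 := hylow i0
    omega
  -- get z, a neighbor of y not adjacent to p
  obtain ⟨z, hz1, hz2⟩ : ∃ z, G.Adj y z ∧ ¬ G.Adj p z := by
    have h1 := hcomp y p neyp nyp
    push_neg at h1
    obtain ⟨z, hz1, hz2⟩ := Set.not_subset.mp h1.1
    rw [SimpleGraph.mem_neighborSet] at hz1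
    refine ⟨z, hz1, fun h => hz2 ?_⟩
    rw [SimpleGraph.mem_neighborSet]
    exact h
  have ezy : G.Adj z y := hz1.symm
  have nzx : ¬ G.Adj z x := fun h => tri_free' hodd hxy hz1 h.symm
  have nzp : ¬ G.Adj z p := fun h => hz2 h.symm
  have nzc : ∀ k, ¬ G.Adj z (c k) := fun k h => by
    have h1 := tri y z (c k); have h2 := adj1 h; have h3 := adj1 hz1; have h4 := hylow k; omega
  have nzq : ¬ G.Adj z q := fun h =>
    c5_free' hodd ezy hxy.symm hxp hpq h.symm nzx nzp nyp nyq nxq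
  -- distinctness from cycle
  have nexc : ∀ k, x ≠ c k := by
    intro k h
    have h1 := hxlow k
    rw [h, SimpleGraph.dist_self] at h1
    omega
  have neyc : ∀ k, y ≠ c k := by
    intro k h
    have h1 := hylow k
    rw [h, SimpleGraph.dist_self] at h1
    omega
  have nepc : ∀ k, p ≠ c k := by
    intro k h
    have h1 := tri x p (c k)
    have h2 : G.dist p (c k) = 0 := by rw [h, SimpleGraph.dist_self]
    have h3 := hxlow k
    omega
  have neqc : ∀ k, q ≠ c k := by
    intro k h
    have h1 := tri x q (c k)
    have h2 : G.dist q (c k) = 0 := by rw [h, SimpleGraph.dist_self]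
    have h3 := hxlow k
    omega
  have nezc : ∀ k, z ≠ c k := by
    rintro k rfl
    exact nyc k hz1
  have nezx : z ≠ x := fun h => hz2 (by rw [h]; exact hxp.symm)
  have nezp : z ≠ p := fun h => nyp (by rw [← h]; exact hz1)
  have nezq : z ≠ q := fun h => nyq (by rw [← h]; exact hz1)
  have neyq : y ≠ q := by
    rintro rfl
    have h1 := hylow i0
    omega
  have nexq : x ≠ q := by
    rintro rfl
    have h1 := hxlow i0
    omega
  -- cycle edge helpers
  have hI : ∀ a b : ZMod 7, a + 1 = b → G.Adj (c (i0 + a)) (c (i0 + b)) := by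
    intro a b h
    exact (hc.2 (i0 + a) (i0 + b)).mpr (Or.inr (by rw [← h, add_assoc]))
  have hnI : ∀ a b : ZMod 7, ¬(a = b + 1 ∨ b = a + 1) → ¬ G.Adj (c (i0 + a)) (c (i0 + b)) := by
    intro a b h hadj
    rcases (hc.2 _ _).mp hadj with h' | h'
    · exact h (Or.inl (add_left_cancel (h'.trans (add_assoc i0 b 1))))
    · exact h (Or.inr (add_left_cancel (h'.trans (add_assoc i0 a 1))))
  have hqc0 : G.Adj q (c (i0 + 0)) := by rwa [add_zero]
  have n1 : ¬ G.Adj q (c (i0 + 1)) := fun h => tri_free' hodd hqc0 (hI 0 1 (by decide)) h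
  have n6 : ¬ G.Adj q (c (i0 + 6)) := fun h => tri_free' hodd h (hI 6 0 (by decide)) hqc0
  by_cases h2 : G.Adj q (c (i0 + 2))
  · -- go around the cycle in the negative direction: s = 6
    have n3 : ¬ G.Adj q (c (i0 + 3)) := fun h => tri_free' hodd h2 (hI 2 3 (by decide)) h
    have n5 : ¬ G.Adj q (c (i0 + 5)) := by
      intro h5
      have n4' : ¬ G.Adj q (c (i0 + 4)) := fun h4 => tri_free' hodd h4 (hI 4 5 (by decide)) h5
      exact c5_free' hodd h2 (hI 2 3 (by decide)) (hI 3 4 (by decide)) (hI 4 5 (by decide))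
        h5.symm n3 n4' (hnI 2 4 (by decide)) (hnI 2 5 (by decide)) (hnI 3 5 (by decide))
    have n4 : ¬ G.Adj q (c (i0 + 4)) := by
      intro h4
      exact c5_free' hodd hqc0 (hI 6 0 (by decide)).symm (hI 5 6 (by decide)).symm
        (hI 4 5 (by decide)).symm h4.symm n6 n5 (hnI 0 5 (by decide)) (hnI 0 4 (by decide))
        (hnI 6 4 (by decide))
    refine hP (build_p10 c hc z y x p q i0 6 (Or.inr rfl) ezy hxy.symm hxp hpq ?_ nzx nzp nzq
      nyp nyq nxq nzc nyc nxc npc ?_ ?_ ?_ ?_ nezx nezp nezq neyp neyq nexq nezc neyc nexc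
      nepc neqc)
    · rw [show ((0 : ZMod 7) * 6) = 0 from by decide]; exact hqc0
    · rw [show ((1 : ZMod 7) * 6) = 6 from by decide]; exact n6
    · rw [show ((2 : ZMod 7) * 6) = 5 from by decide]; exact n5
    · rw [show ((3 : ZMod 7) * 6) = 4 from by decide]; exact n4
    · rw [show ((4 : ZMod 7) * 6) = 3 from by decide]; exact n3
  · -- go around the cycle in the positive direction: s = 1
    have n3 : ¬ G.Adj q (c (i0 + 3)) := by
      intro h3
      exact c5_free' hodd hqc0 (hI 0 1 (by decide)) (hI 1 2 (by decide)) (hI 2 3 (by decide))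
        h3.symm n1 h2 (hnI 0 2 (by decide)) (hnI 0 3 (by decide)) (hnI 1 3 (by decide))
    have n4 : ¬ G.Adj q (c (i0 + 4)) := by
      intro h4
      have n5' : ¬ G.Adj q (c (i0 + 5)) := fun h5 => tri_free' hodd h4 (hI 4 5 (by decide)) h5
      exact c5_free' hodd h4 (hI 4 5 (by decide)) (hI 5 6 (by decide)) (hI 6 0 (by decide))
        hqc0.symm n5' n6 (hnI 4 6 (by decide)) (hnI 4 0 (by decide)) (hnI 5 0 (by decide))
    refine hP (build_p10 c hc z y x p q i0 1 (Or.inl rfl) ezy hxy.symm hxp hpq ?_ nzx nzp nzq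
      nyp nyq nxq nzc nyc nxc npc ?_ ?_ ?_ ?_ nezx nezp nezq neyp neyq nexq nezc neyc nexc
      nepc neqc)
    · rw [show ((0 : ZMod 7) * 1) = 0 from by decide]; exact hqc0
    · rw [show ((1 : ZMod 7) * 1) = 1 from by decide]; exact n1
    · rw [show ((2 : ZMod 7) * 1) = 2 from by decide]; exact h2
    · rw [show ((3 : ZMod 7) * 1) = 3 from by decide]; exact n3
    · rw [show ((4 : ZMod 7) * 1) = 4 from by decide]; exact n4
end

section
/- Let G be a connected P10-free graph with all induced odd cycles of length 7, with no comparable pair, and C an induced 7-cycle. If a vertex x at distance 2 from C has a neighbor at distance 3 from C, then x has no neighbor that has exactly one neighbor on C. -/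
open SimpleGraph

lemma tri_free {V : Type*} (G : SimpleGraph V) (hodd : OddCyclesAre7 G)
    {u v w : V} (huv : G.Adj u v) (hvw : G.Adj v w) (huw : G.Adj u w) : False := by
  have n10 : (1:ZMod 3) ≠ 0 := by decide
  have n20 : (2:ZMod 3) ≠ 0 := by decide
  have n21 : (2:ZMod 3) ≠ 1 := by decide
  have h3 : HasInducedCycle G 3 := by
    refine ⟨fun i => if i = 0 then u else if i = 1 then v else w, ?_, ?_⟩
    · intro i j h
      have hk : ∀ k : ZMod 3, k = 0 ∨ k = 1 ∨ k = 2 := by decide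
      rcases hk i with rfl | rfl | rfl <;> rcases hk j with rfl | rfl | rfl <;>
        simp only [if_pos rfl, if_neg n10, if_neg n20, if_neg n21] at h <;>
        first
          | rfl
          | exact absurd h huv.ne
          | exact absurd h huw.ne
          | exact absurd h hvw.ne
          | exact absurd h.symm huv.ne
          | exact absurd h.symm huw.ne
          | exact absurd h.symm hvw.ne
    · intro i j
      have hk : ∀ k : ZMod 3, k = 0 ∨ k = 1 ∨ k = 2 := by decide
      rcases hk i with rfl | rfl | rfl <;> rcases hk j with rfl | rfl | rfl <;>
        simp only [if_pos rfl, if_neg n10, if_neg n20, if_neg n21] <;>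
        first
          | (simp [huv, hvw, huw, huv.symm, hvw.symm, huw.symm]; try decide)
          | decide
  have := hodd 3 le_rfl (by decide) h3
  omega


set_option maxHeartbeats 2000000 in
set_option maxRecDepth 4000 in
theorem stmt5 {V : Type*} [Fintype V] (G : SimpleGraph V)
    (hconn : G.Connected) (hP : ¬ HasInducedPath G 10)
    (hodd : OddCyclesAre7 G) (hcomp : NoComparablePair G)
    (c : ZMod 7 → V) (hc : IsInducedCycle G 7 c)
    (x : V) (hx : distToCycle G c x = 2)
    (hxd : ∃ d : V, G.Adj x d ∧ distToCycle G c d = 3) :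
    ∀ a : V, G.Adj x a → ¬ ∃ i : ZMod 7, a ∈ Aset G c i := by
  rintro a hxa ⟨i, hai⟩
  obtain ⟨d, hxd', hd3⟩ := hxd
  obtain ⟨hcinj, hcadj⟩ := hc
  simp only [Aset, Set.mem_setOf_eq] at hai
  -- basic distance facts
  have hdist2 : ∀ j, 2 ≤ G.dist x (c j) := by
    intro j
    have h : distToCycle G c x ≤ G.dist x (c j) := Nat.sInf_le ⟨j, rfl⟩
    rwa [hx] at h
  have hdist3 : ∀ j, 3 ≤ G.dist d (c j) := by
    intro j
    have h : distToCycle G c d ≤ G.dist d (c j) := Nat.sInf_le ⟨j, rfl⟩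
    rwa [hd3] at h
  have hadjdist : ∀ u v : V, G.Adj u v → G.dist u v ≤ 1 := by
    intro u v h
    simpa using SimpleGraph.dist_le h.toWalk
  have h2dist : ∀ u w v : V, G.Adj u w → G.Adj w v → G.dist u v ≤ 2 := by
    intro u w v h1 h2
    simpa using SimpleGraph.dist_le (Walk.cons h1 h2.toWalk)
  -- a's cycle neighborhood
  have haC : ∀ j, G.Adj a (c j) ↔ j = i := by
    intro j
    constructor
    · intro h
      have hm : c j ∈ G.neighborSet a ∩ Set.range c := ⟨h, j, rfl⟩
      rw [hai] at hm
      exact hcinj hm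
    · intro h
      rw [h]
      have hm : c i ∈ G.neighborSet a ∩ Set.range c := by rw [hai]; rfl
      exact hm.1
  -- non-adjacency with the cycle
  have hxC : ∀ j, ¬ G.Adj x (c j) := fun j h => by
    have := hadjdist _ _ h; have := hdist2 j; omega
  have hdC : ∀ j, ¬ G.Adj d (c j) := fun j h => by
    have := hadjdist _ _ h; have := hdist3 j; omega
  have hd_far : ∀ e : V, G.Adj d e → ∀ j, ¬ G.Adj e (c j) := fun e he j h => by
    have := h2dist d e (c j) he h; have := hdist3 j; omega
  have hda : ¬ G.Adj d a := fun h => by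
    have := h2dist d a (c i) h ((haC i).mpr rfl); have := hdist3 i; omega
  have hd_ne_a : d ≠ a := fun h => hdC i (by rw [h]; exact (haC i).mpr rfl)
  -- vertices off the cycle
  have hnotC : ∀ v : V, (∀ j, ¬ G.Adj v (c j)) → ∀ j, v ≠ c j := by
    intro v hv j h
    exact hv (j+1) (by rw [h]; exact (hcadj j (j+1)).mpr (Or.inr rfl))
  have haX : ∀ j, a ≠ c j := by
    intro j h
    have h1 : (j + 1 : ZMod 7) = i := (haC (j+1)).mp (by rw [h]; exact (hcadj j (j+1)).mpr (Or.inr rfl))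
    have h2 : (j - 1 : ZMod 7) = i := (haC (j-1)).mp
      (by rw [h]; exact (hcadj j (j-1)).mpr (Or.inl (by ring)))
    have h3 : (j + 1 : ZMod 7) = j + (-1) := by rw [h1, ← h2]; ring
    have h4 : (1 : ZMod 7) = -1 := add_left_cancel h3
    exact absurd h4 (by decide)
  -- shifted cycle facts
  have hceq : ∀ s t : ZMod 7, c (i+s) = c (i+t) ↔ s = t :=
    fun s t => ⟨fun h => add_left_cancel (hcinj h), fun h => by rw [h]⟩
  have hccadj : ∀ s t : ZMod 7, G.Adj (c (i+s)) (c (i+t)) ↔ (s = t + 1 ∨ t = s + 1) := by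
    intro s t
    rw [hcadj]
    constructor
    · rintro (h | h)
      · exact Or.inl (add_left_cancel (show i + s = i + (t+1) by rw [h]; ring))
      · exact Or.inr (add_left_cancel (show i + t = i + (s+1) by rw [h]; ring))
    · rintro (rfl | rfl)
      · exact Or.inl (by ring)
      · exact Or.inr (by ring)
  have hshift : ∀ s : ZMod 7, (i + s = i) ↔ s = 0 := by
    intro s
    constructor
    · intro h; linear_combination h
    · rintro rfl; rw [add_zero]
  have hshift' : ∀ s : ZMod 7, (i = i + s) ↔ s = 0 := by
    intro s
    constructor
    · intro h; linear_combination -h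
    · rintro rfl; rw [add_zero]
  have haC' : ∀ j, G.Adj (c j) a ↔ j = i := fun j => by rw [G.adj_comm]; exact haC j
  have hceq0 : ∀ t : ZMod 7, (c i = c (i + t)) ↔ t = 0 := fun t =>
    ⟨fun h => by have := hcinj h; linear_combination -this, fun h => by rw [h, add_zero]⟩
  have hceq0' : ∀ t : ZMod 7, (c (i + t) = c i) ↔ t = 0 := fun t =>
    ⟨fun h => by have := hcinj h; linear_combination this, fun h => by rw [h, add_zero]⟩
  have hcc0 : ∀ t : ZMod 7, G.Adj (c i) (c (i + t)) ↔ (t = -1 ∨ t = 1) := by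
    intro t
    rw [hcadj]
    constructor
    · rintro (h | h)
      · exact Or.inl (by linear_combination -h)
      · exact Or.inr (by linear_combination h)
    · rintro (rfl | rfl)
      · exact Or.inl (by ring)
      · exact Or.inr (by ring)
  have hcc0' : ∀ t : ZMod 7, G.Adj (c (i + t)) (c i) ↔ (t = -1 ∨ t = 1) := by
    intro t
    rw [G.adj_comm]
    exact hcc0 t
  have haCs : ∀ s : ZMod 7, G.Adj a (c (i+s)) ↔ s = 0 := by
    intro s
    rw [haC, hshift]
  have haCs' : ∀ s : ZMod 7, G.Adj (c (i+s)) a ↔ s = 0 := fun s => by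
    rw [G.adj_comm]; exact haCs s
  have haci : G.Adj a (c i) := (haC i).mpr rfl
  have hcia : G.Adj (c i) a := ((haC i).mpr rfl).symm
  -- the key step: N(d) ⊆ N(a)
  have key : ∀ e : V, G.Adj d e → G.Adj a e := by
    intro e hde
    by_contra hae
    rcases eq_or_ne e x with rfl | hex
    · exact hae hxa.symm
    have heC : ∀ j, ¬ G.Adj e (c j) := hd_far e hde
    have hea : ¬ G.Adj e a := fun h => hae h.symm
    have hexadj : ¬ G.Adj e x := fun h => tri_free G hodd hde h hxd'.symm
    have hxe : ¬ G.Adj x e := fun h => hexadj h.symm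
    have hed : G.Adj e d := hde.symm
    have hax : G.Adj a x := hxa.symm
    have hdx : G.Adj d x := hxd'.symm
    have had : ¬ G.Adj a d := fun h => hda h.symm
    have heC' : ∀ j, ¬ G.Adj (c j) e := fun j h => heC j h.symm
    have hdC' : ∀ j, ¬ G.Adj (c j) d := fun j h => hdC j h.symm
    have hxC' : ∀ j, ¬ G.Adj (c j) x := fun j h => hxC j h.symm
    have hene : ∀ j, e ≠ c j := hnotC e heC
    have hdne : ∀ j, d ≠ c j := hnotC d hdC
    have hxne : ∀ j, x ≠ c j := hnotC x hxC
    have hene' : ∀ j, c j ≠ e := fun j h => hene j h.symm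
    have hdne' : ∀ j, c j ≠ d := fun j h => hdne j h.symm
    have hxne' : ∀ j, c j ≠ x := fun j h => hxne j h.symm
    have haX' : ∀ j, c j ≠ a := fun j h => haX j h.symm
    have hed_ne : e ≠ d := hed.ne
    have hde_ne : d ≠ e := hed.ne'
    have hxe_ne : x ≠ e := hex.symm
    have hea_ne : e ≠ a := fun h => heC i (by rw [h]; exact (haC i).mpr rfl)
    have hae_ne : a ≠ e := fun h => hea_ne h.symm
    have hdx_ne : d ≠ x := hdx.ne
    have hxd_ne : x ≠ d := hdx.ne'
    have hda_ne : d ≠ a := hd_ne_a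
    have had_ne : a ≠ d := fun h => hd_ne_a h.symm
    have hxa_ne : x ≠ a := hxa.ne
    have hax_ne : a ≠ x := hxa.ne'
    apply hP
    refine ⟨fun s : Fin 10 =>
      if s.val = 0 then e else if s.val = 1 then d else if s.val = 2 then x else
      if s.val = 3 then a else if s.val = 4 then c i else if s.val = 5 then c (i+1) else
      if s.val = 6 then c (i+2) else if s.val = 7 then c (i+3) else
      if s.val = 8 then c (i+4) else c (i+5), ?_, ?_⟩
    · intro s t h
      obtain ⟨sv, hs⟩ := s
      obtain ⟨tv, ht⟩ := t
      interval_cases sv <;> interval_cases tv <;>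
        first
          | rfl
          | (exfalso
             simp only [eq_self_iff_true, if_true, Nat.reduceEqDiff, OfNat.ofNat_ne_zero,
               OfNat.ofNat_ne_one, one_ne_zero, if_false, hceq, hceq0, hceq0'] at h <;>
             first
               | exact hed_ne h | exact hde_ne h | exact hex h | exact hxe_ne h
               | exact hea_ne h | exact hae_ne h | exact hdx_ne h | exact hxd_ne h
               | exact hda_ne h | exact had_ne h | exact hxa_ne h | exact hax_ne h
               | exact hene _ h | exact hdne _ h | exact hxne _ h | exact haX _ h
               | exact hene' _ h | exact hdne' _ h | exact hxne' _ h | exact haX' _ h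
               | exact absurd h (by decide))
    · intro s t
      obtain ⟨sv, hs⟩ := s
      obtain ⟨tv, ht⟩ := t
      interval_cases sv <;> interval_cases tv <;>
        simp only [eq_self_iff_true, if_true, Nat.reduceEqDiff, OfNat.ofNat_ne_zero,
          OfNat.ofNat_ne_one, one_ne_zero, if_false,
          hccadj, hcc0, hcc0', haCs, haCs', haci, hcia, hed, hde, hdx, hxd', hxa, hax,
          hexadj, hxe, hea, hae, hda, had, heC, heC', hdC, hdC', hxC, hxC',
          SimpleGraph.irrefl, iff_true, iff_false, true_iff, false_iff, not_false_iff] <;>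
        decide
  exact hcomp d a hd_ne_a hda (Or.inl (fun z hz => key z hz))
end

section
/- Let G be a connected P10-free graph with all induced odd cycles of length 7, with no comparable pair, and C an induced 7-cycle. Then the set D1'' of vertices at distance 2 from C having a neighbor at distance 3 from C is independent, and moreover no vertex of D1'' is adjacent to any other vertex at distance 2 from C. -/
open SimpleGraph

section AuxStmt6

variable {V : Type*} {G : SimpleGraph V}

lemma aux_c3 (hodd : OddCyclesAre7 G) {u v w : V}
    (h1 : G.Adj u v) (h2 : G.Adj v w) (h3 : G.Adj u w) : False := by
  have hcyc : HasInducedCycle G 3 := by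
    have h1' := h1.symm; have h2' := h2.symm; have h3' := h3.symm
    have d1 := h1.ne; have d2 := h2.ne; have d3 := h3.ne
    refine ⟨fun i => if i = 0 then u else if i = 1 then v else w, ?_, ?_⟩
    · intro i j h
      have hz : ∀ z : ZMod 3, z = 0 ∨ z = 1 ∨ z = 2 := by decide
      rcases hz i with rfl | rfl | rfl <;> rcases hz j with rfl | rfl | rfl <;>
        simp_all (config := { decide := true })
    · intro i j
      have hz : ∀ z : ZMod 3, z = 0 ∨ z = 1 ∨ z = 2 := by decide
      rcases hz i with rfl | rfl | rfl <;> rcases hz j with rfl | rfl | rfl <;>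
        simp_all (config := { decide := true })
  exact absurd (hodd 3 (by norm_num) (Nat.odd_iff.mpr rfl) hcyc) (by norm_num)

lemma aux_c5 (hodd : OddCyclesAre7 G) {v0 v1 v2 v3 v4 : V}
    (e01 : G.Adj v0 v1) (e12 : G.Adj v1 v2) (e23 : G.Adj v2 v3) (e34 : G.Adj v3 v4)
    (e40 : G.Adj v4 v0)
    (n02 : ¬ G.Adj v0 v2) (n03 : ¬ G.Adj v0 v3) (n13 : ¬ G.Adj v1 v3)
    (n14 : ¬ G.Adj v1 v4) (n24 : ¬ G.Adj v2 v4) : False := by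
  have hcyc : HasInducedCycle G 5 := by
    have e01' := e01.symm; have e12' := e12.symm; have e23' := e23.symm
    have e34' := e34.symm; have e40' := e40.symm
    have n02' : ¬ G.Adj v2 v0 := fun h => n02 h.symm
    have n03' : ¬ G.Adj v3 v0 := fun h => n03 h.symm
    have n13' : ¬ G.Adj v3 v1 := fun h => n13 h.symm
    have n14' : ¬ G.Adj v4 v1 := fun h => n14 h.symm
    have n24' : ¬ G.Adj v4 v2 := fun h => n24 h.symm
    have d01 := e01.ne; have d12 := e12.ne; have d23 := e23.ne; have d34 := e34.ne
    have d40 := e40.ne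
    have d02 : v0 ≠ v2 := fun h => n24 (by rw [← h]; exact e40')
    have d03 : v0 ≠ v3 := fun h => n02 (by rw [h]; exact e23.symm)
    have d13 : v1 ≠ v3 := fun h => n14 (by rw [h]; exact e34)
    have d14 : v1 ≠ v4 := fun h => n13 (by rw [h]; exact e34.symm)
    have d24 : v2 ≠ v4 := fun h => n02 (by rw [h]; exact e40.symm)
    refine ⟨fun i => if i = 0 then v0 else if i = 1 then v1 else if i = 2 then v2
      else if i = 3 then v3 else v4, ?_, ?_⟩
    · intro i j h
      have hz : ∀ z : ZMod 5, z = 0 ∨ z = 1 ∨ z = 2 ∨ z = 3 ∨ z = 4 := by decide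
      rcases hz i with rfl | rfl | rfl | rfl | rfl <;>
        rcases hz j with rfl | rfl | rfl | rfl | rfl <;>
        simp_all (config := { decide := true })
    · intro i j
      have hz : ∀ z : ZMod 5, z = 0 ∨ z = 1 ∨ z = 2 ∨ z = 3 ∨ z = 4 := by decide
      rcases hz i with rfl | rfl | rfl | rfl | rfl <;>
        rcases hz j with rfl | rfl | rfl | rfl | rfl <;>
        simp_all (config := { decide := true })
  exact absurd (hodd 5 (by norm_num) (Nat.odd_iff.mpr rfl) hcyc) (by norm_num)

lemma aux_gap {c : ZMod 7 → V} (hodd : OddCyclesAre7 G)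
    (cadj : ∀ i j, G.Adj (c i) (c j) ↔ (i = j + 1 ∨ j = i + 1))
    {b : V} {i0 : ZMod 7} (hb0 : G.Adj b (c i0)) :
    ∃ k, G.Adj b (c k) ∧ ¬ G.Adj b (c (k+1)) ∧ ¬ G.Adj b (c (k+2)) ∧
      ¬ G.Adj b (c (k+3)) ∧ ¬ G.Adj b (c (k+4)) := by
  have hccpos : ∀ a : ZMod 7, G.Adj (c a) (c (a+1)) := fun a => (cadj _ _).2 (Or.inr rfl)
  have hccne : ∀ (a t s : ZMod 7), t ≠ s + 1 → s ≠ t + 1 → ¬ G.Adj (c (a+t)) (c (a+s)) := by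
    intro a t s h1 h2 hadj
    rcases (cadj _ _).1 hadj with h | h
    · rw [add_assoc] at h; exact h1 (add_left_cancel h)
    · rw [add_assoc] at h; exact h2 (add_left_cancel h)
  have h1 : ∀ a, G.Adj b (c a) → ¬ G.Adj b (c (a+1)) :=
    fun a ha ha1 => aux_c3 hodd ha (hccpos a) ha1
  have h3 : ∀ a, G.Adj b (c a) → ¬ G.Adj b (c (a+3)) := by
    intro a ha ha3
    have hn1 : ¬ G.Adj b (c (a+1)) := h1 a ha
    have hn2 : ¬ G.Adj b (c (a+2)) := fun h2 => h1 (a+2) h2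
      (by rw [show a+2+1 = a+3 from by rw [add_assoc]; norm_num]; exact ha3)
    refine aux_c5 hodd ha (hccpos a) ?_ ?_ ha3.symm hn1 hn2 ?_ ?_ ?_
    · rw [show a+2 = a+1+1 from by rw [add_assoc]; norm_num]; exact hccpos (a+1)
    · rw [show a+3 = a+2+1 from by rw [add_assoc]; norm_num]; exact hccpos (a+2)
    · have := hccne a 0 2 (by decide) (by decide); simpa using this
    · have := hccne a 0 3 (by decide) (by decide); simpa using this
    · exact hccne a 1 3 (by decide) (by decide)
  have h4 : ∀ a, G.Adj b (c a) → ¬ G.Adj b (c (a+4)) := by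
    intro a ha ha4
    exact h3 (a+4) ha4 (by
      rw [show a+4+3 = a from by rw [add_assoc, show (4:ZMod 7)+3 = 0 from by decide, add_zero]]
      exact ha)
  have h6 : ∀ a, G.Adj b (c a) → ¬ G.Adj b (c (a+6)) := by
    intro a ha ha6
    exact h1 (a+6) ha6 (by
      rw [show a+6+1 = a from by rw [add_assoc, show (6:ZMod 7)+1 = 0 from by decide, add_zero]]
      exact ha)
  by_cases h2 : G.Adj b (c (i0+2))
  · refine ⟨i0+2, h2, h1 _ h2, ?_, h3 _ h2, ?_⟩
    · rw [show i0+2+2 = i0+4 from by rw [add_assoc, show (2:ZMod 7)+2 = 4 from by decide]]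
      exact h4 i0 hb0
    · rw [show i0+2+4 = i0+6 from by rw [add_assoc, show (2:ZMod 7)+4 = 6 from by decide]]
      exact h6 i0 hb0
  · exact ⟨i0, hb0, h1 i0 hb0, h2, h3 i0 hb0, h4 i0 hb0⟩

end AuxStmt6

set_option maxHeartbeats 1000000 in
theorem aux_buildP10 {V : Type*} {G : SimpleGraph V} {c : ZMod 7 → V}
    (cinj : Function.Injective c)
    (cadj : ∀ i j, G.Adj (c i) (c j) ↔ (i = j + 1 ∨ j = i + 1))
    {e d x y b : V} {k : ZMod 7}
    (aed : G.Adj e d) (adx : G.Adj d x) (axy : G.Adj x y) (ayb : G.Adj y b)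
    (abk : G.Adj b (c k))
    (nb1 : ¬ G.Adj b (c (k+1))) (nb2 : ¬ G.Adj b (c (k+2)))
    (nb3 : ¬ G.Adj b (c (k+3))) (nb4 : ¬ G.Adj b (c (k+4)))
    (nec : ∀ i, ¬ G.Adj e (c i)) (nenc : ∀ i, e ≠ c i)
    (ndc : ∀ i, ¬ G.Adj d (c i)) (ndnc : ∀ i, d ≠ c i)
    (nxc : ∀ i, ¬ G.Adj x (c i)) (nxnc : ∀ i, x ≠ c i)
    (nyc : ∀ i, ¬ G.Adj y (c i)) (nync : ∀ i, y ≠ c i)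
    (nbnc : ∀ i, b ≠ c i)
    (nex : ¬ G.Adj e x) (ney : ¬ G.Adj e y) (neb : ¬ G.Adj e b)
    (ndy : ¬ G.Adj d y) (ndb : ¬ G.Adj d b) (nxb : ¬ G.Adj x b)
    (hex : e ≠ x) (hey : e ≠ y) (heb : e ≠ b) (hdy : d ≠ y) (hdb : d ≠ b)
    (hxb : x ≠ b) : HasInducedPath G 10 := by
  -- symmetric copies
  have aed' := aed.symm; have adx' := adx.symm; have axy' := axy.symm
  have ayb' := ayb.symm; have abk' := abk.symm
  have nb1' : ¬ G.Adj (c (k+1)) b := fun h => nb1 h.symm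
  have nb2' : ¬ G.Adj (c (k+2)) b := fun h => nb2 h.symm
  have nb3' : ¬ G.Adj (c (k+3)) b := fun h => nb3 h.symm
  have nb4' : ¬ G.Adj (c (k+4)) b := fun h => nb4 h.symm
  have nec' : ∀ i, ¬ G.Adj (c i) e := fun i h => nec i h.symm
  have ndc' : ∀ i, ¬ G.Adj (c i) d := fun i h => ndc i h.symm
  have nxc' : ∀ i, ¬ G.Adj (c i) x := fun i h => nxc i h.symm
  have nyc' : ∀ i, ¬ G.Adj (c i) y := fun i h => nyc i h.symm
  have nenc' : ∀ i, c i ≠ e := fun i h => nenc i h.symm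
  have ndnc' : ∀ i, c i ≠ d := fun i h => ndnc i h.symm
  have nxnc' : ∀ i, c i ≠ x := fun i h => nxnc i h.symm
  have nync' : ∀ i, c i ≠ y := fun i h => nync i h.symm
  have nbnc' : ∀ i, c i ≠ b := fun i h => nbnc i h.symm
  have nex' : ¬ G.Adj x e := fun h => nex h.symm
  have ney' : ¬ G.Adj y e := fun h => ney h.symm
  have neb' : ¬ G.Adj b e := fun h => neb h.symm
  have ndy' : ¬ G.Adj y d := fun h => ndy h.symm
  have ndb' : ¬ G.Adj b d := fun h => ndb h.symm
  have nxb' : ¬ G.Adj b x := fun h => nxb h.symm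
  have hex' := hex.symm; have hey' := hey.symm; have heb' := heb.symm
  have hdy' := hdy.symm; have hdb' := hdb.symm; have hxb' := hxb.symm
  have hed := aed.ne; have hed' := hed.symm
  have hdx := adx.ne; have hdx' := hdx.symm
  have hxy := axy.ne; have hxy' := hxy.symm
  have hyb := ayb.ne; have hyb' := hyb.symm
  -- cycle-side facts
  have hccne : ∀ (t s : ZMod 7), t ≠ s + 1 → s ≠ t + 1 → ¬ G.Adj (c (k+t)) (c (k+s)) := by
    intro t s h1 h2 hadj
    rcases (cadj _ _).1 hadj with h | h
    · rw [add_assoc] at h; exact h1 (add_left_cancel h)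
    · rw [add_assoc] at h; exact h2 (add_left_cancel h)
  have hcne : ∀ (t s : ZMod 7), t ≠ s → c (k+t) ≠ c (k+s) :=
    fun t s hts h => hts (add_left_cancel (cinj h))
  have g56 : G.Adj (c k) (c (k+1)) := (cadj _ _).2 (Or.inr rfl)
  have g67 : G.Adj (c (k+1)) (c (k+2)) := (cadj _ _).2 (Or.inr (by ring))
  have g78 : G.Adj (c (k+2)) (c (k+3)) := (cadj _ _).2 (Or.inr (by ring))
  have g89 : G.Adj (c (k+3)) (c (k+4)) := (cadj _ _).2 (Or.inr (by ring))
  have g56' := g56.symm; have g67' := g67.symm; have g78' := g78.symm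
  have g89' := g89.symm
  have n57 : ¬ G.Adj (c k) (c (k+2)) := by
    have := hccne 0 2 (by decide) (by decide); simpa using this
  have n58 : ¬ G.Adj (c k) (c (k+3)) := by
    have := hccne 0 3 (by decide) (by decide); simpa using this
  have n59 : ¬ G.Adj (c k) (c (k+4)) := by
    have := hccne 0 4 (by decide) (by decide); simpa using this
  have n68 : ¬ G.Adj (c (k+1)) (c (k+3)) := hccne 1 3 (by decide) (by decide)
  have n69 : ¬ G.Adj (c (k+1)) (c (k+4)) := hccne 1 4 (by decide) (by decide)
  have n79 : ¬ G.Adj (c (k+2)) (c (k+4)) := hccne 2 4 (by decide) (by decide)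
  have n57' : ¬ G.Adj (c (k+2)) (c k) := fun h => n57 h.symm
  have n58' : ¬ G.Adj (c (k+3)) (c k) := fun h => n58 h.symm
  have n59' : ¬ G.Adj (c (k+4)) (c k) := fun h => n59 h.symm
  have n68' : ¬ G.Adj (c (k+3)) (c (k+1)) := fun h => n68 h.symm
  have n69' : ¬ G.Adj (c (k+4)) (c (k+1)) := fun h => n69 h.symm
  have n79' : ¬ G.Adj (c (k+4)) (c (k+2)) := fun h => n79 h.symm
  have m56 : c k ≠ c (k+1) := by have := hcne 0 1 (by decide); simpa using this
  have m57 : c k ≠ c (k+2) := by have := hcne 0 2 (by decide); simpa using this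
  have m58 : c k ≠ c (k+3) := by have := hcne 0 3 (by decide); simpa using this
  have m59 : c k ≠ c (k+4) := by have := hcne 0 4 (by decide); simpa using this
  have m67 : c (k+1) ≠ c (k+2) := hcne 1 2 (by decide)
  have m68 : c (k+1) ≠ c (k+3) := hcne 1 3 (by decide)
  have m69 : c (k+1) ≠ c (k+4) := hcne 1 4 (by decide)
  have m78 : c (k+2) ≠ c (k+3) := hcne 2 3 (by decide)
  have m79 : c (k+2) ≠ c (k+4) := hcne 2 4 (by decide)
  have m89 : c (k+3) ≠ c (k+4) := hcne 3 4 (by decide)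
  have m56' := m56.symm; have m57' := m57.symm; have m58' := m58.symm
  have m59' := m59.symm; have m67' := m67.symm; have m68' := m68.symm
  have m69' := m69.symm; have m78' := m78.symm; have m79' := m79.symm
  have m89' := m89.symm
  refine ⟨fun i => if i.val = 0 then e else if i.val = 1 then d else if i.val = 2 then x
    else if i.val = 3 then y else if i.val = 4 then b else if i.val = 5 then c k
    else if i.val = 6 then c (k+1) else if i.val = 7 then c (k+2)
    else if i.val = 8 then c (k+3) else c (k+4), ?_, ?_⟩
  · intro i j
    fin_cases i <;> fin_cases j <;> norm_num <;>
      first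
      | assumption
      | exact nenc _ | exact nenc' _ | exact ndnc _ | exact ndnc' _
      | exact nxnc _ | exact nxnc' _ | exact nync _ | exact nync' _
      | exact nbnc _ | exact nbnc' _
      | exact fun h => absurd h (by
          first
          | assumption
          | exact nenc _ | exact nenc' _ | exact ndnc _ | exact ndnc' _
          | exact nxnc _ | exact nxnc' _ | exact nync _ | exact nync' _
          | exact nbnc _ | exact nbnc' _)
  · intro i j
    fin_cases i <;> fin_cases j <;> norm_num <;>
      first
      | assumption
      | exact nec _ | exact nec' _ | exact ndc _ | exact ndc' _
      | exact nxc _ | exact nxc' _ | exact nyc _ | exact nyc' _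
      | exact fun h => G.loopless _ h


theorem stmt6 {V : Type*} [Fintype V] (G : SimpleGraph V)
    (hconn : G.Connected) (hP : ¬ HasInducedPath G 10)
    (hodd : OddCyclesAre7 G) (hcomp : NoComparablePair G)
    (c : ZMod 7 → V) (hc : IsInducedCycle G 7 c) :
    (∀ x y : V,
        (distToCycle G c x = 2 ∧ ∃ d, G.Adj x d ∧ distToCycle G c d = 3) →
        (distToCycle G c y = 2 ∧ ∃ d, G.Adj y d ∧ distToCycle G c d = 3) →
        ¬ G.Adj x y) ∧
    (∀ x y : V,
        (distToCycle G c x = 2 ∧ ∃ d, G.Adj x d ∧ distToCycle G c d = 3) →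
        distToCycle G c y = 2 → ¬ G.Adj x y) := by
  obtain ⟨cinj, cadj⟩ := hc
  have hdle : ∀ (v : V) (i : ZMod 7), distToCycle G c v ≤ G.dist v (c i) :=
    fun v i => Nat.sInf_le ⟨i, rfl⟩
  have hdmem : ∀ v : V, ∃ i, G.dist v (c i) = distToCycle G c v := by
    intro v
    have h : {d : ℕ | ∃ i : ZMod 7, G.dist v (c i) = d}.Nonempty := ⟨G.dist v (c 0), 0, rfl⟩
    exact Nat.sInf_mem h
  have hadjd : ∀ u v : V, G.Adj u v → distToCycle G c u ≤ distToCycle G c v + 1 := by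
    intro u v huv
    obtain ⟨i, hi⟩ := hdmem v
    have h1 : G.dist u (c i) ≤ G.dist u v + G.dist v (c i) := hconn.dist_triangle
    have h2 : G.dist u v ≤ 1 := by simpa using SimpleGraph.dist_le huv.toWalk
    have h3 := hdle u i
    omega
  have hfaradj : ∀ v : V, 2 ≤ distToCycle G c v → ∀ i, ¬ G.Adj v (c i) := by
    intro v hv i hadj
    have h1 : G.dist v (c i) ≤ 1 := by simpa using SimpleGraph.dist_le hadj.toWalk
    have h2 := hdle v i
    omega
  have hfarne : ∀ v : V, 1 ≤ distToCycle G c v → ∀ i, v ≠ c i := by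
    intro v hv i he
    have h1 : G.dist v (c i) = 0 := by rw [he]; exact SimpleGraph.dist_self
    have h2 := hdle v i
    omega
  have key : ∀ x y : V, (distToCycle G c x = 2 ∧ ∃ d, G.Adj x d ∧ distToCycle G c d = 3) →
      distToCycle G c y = 2 → ¬ G.Adj x y := by
    rintro x y ⟨hx2, d, hxd, hd3⟩ hy2 hxy
    obtain ⟨i0, hi0⟩ := hdmem y
    rw [hy2] at hi0
    obtain ⟨p, hp⟩ := hconn.exists_walk_length_eq_dist y (c i0)
    rw [hi0] at hp
    obtain ⟨b, hyb, hbc0⟩ : ∃ b, G.Adj y b ∧ G.Adj b (c i0) := by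
      cases p with
      | nil => simp at hp
      | cons h q =>
        cases q with
        | nil => simp at hp
        | cons h' r =>
          have hr : r.length = 0 := by
            simp only [SimpleGraph.Walk.length_cons] at hp
            omega
          have he := SimpleGraph.Walk.eq_of_length_eq_zero hr
          exact ⟨_, h, he ▸ h'⟩
    have ndy : ¬ G.Adj d y := fun h => aux_c3 hodd hxy h.symm hxd
    have hbnotc : ∀ j, b ≠ c j := by
      intro j he
      exact hfaradj y (by omega) j (by rw [← he]; exact hyb)
    have hdCb : distToCycle G c b ≤ 1 :=
      le_trans (hdle b i0) (by simpa using SimpleGraph.dist_le hbc0.toWalk)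
    have nxb : ¬ G.Adj x b := fun h => aux_c3 hodd hxy hyb h
    have ndb : ¬ G.Adj d b := fun h => by have := hadjd d b h; omega
    have hdney : d ≠ y := by intro h; rw [h] at hd3; omega
    obtain ⟨e, hde, hye⟩ : ∃ e, G.Adj d e ∧ ¬ G.Adj y e := by
      by_contra hcon
      push_neg at hcon
      exact hcomp d y hdney ndy (Or.inl (fun z hz => hcon z hz))
    have hde2 : 2 ≤ distToCycle G c e := by have := hadjd d e hde; omega
    have nex : ¬ G.Adj e x := fun h => aux_c3 hodd h hxd hde.symm
    have henx : e ≠ x := fun h => hye (by rw [h]; exact hxy.symm)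
    have ney2 : ¬ G.Adj e y := fun h => hye h.symm
    have neb : ¬ G.Adj e b := fun h =>
      aux_c5 hodd hde.symm hxd.symm hxy hyb h.symm nex ney2 ndy ndb nxb
    obtain ⟨k, hbk, g1, g2, g3, g4⟩ := aux_gap hodd cadj hbc0
    exact hP (aux_buildP10 cinj cadj hde.symm hxd.symm hxy hyb hbk g1 g2 g3 g4
      (hfaradj e hde2) (hfarne e (by omega)) (hfaradj d (by omega)) (hfarne d (by omega))
      (hfaradj x (by omega)) (hfarne x (by omega)) (hfaradj y (by omega)) (hfarne y (by omega))
      hbnotc nex ney2 neb ndy ndb nxb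
      henx (fun h => ndy (h ▸ hde)) (fun h => ndb (h ▸ hde)) hdney
      (fun h => by rw [h] at hd3; omega) (fun h => by rw [h] at hx2; omega))
  exact ⟨fun x y hx hy => key x y hx hy.1, key⟩
end

section
/- Let G be a C3-free and C5-free graph, C = v1-...-v7 an induced 7-cycle (indices mod 7), and B_j the set of vertices whose neighborhood on C is exactly {v_{j-1}, v_{j+1}}. Then for every vertex x at distance 2 from C there exists an index i with N(x) ∩ B ⊆ B_{i-1} ∪ B_{i+1}, where B = ∪_j B_j. -/
open SimpleGraph

/-!
If `x` had neighbours `b ∈ B_j` and `b' ∈ B_k` with `k - j = ±1` or `±3`, then (up to swapping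
them) `b` sees `v_{j+1}` but not `v_{j+2}` while `b'` sees `v_{j+2}` but not `v_{j+1}`; as `x` is
far from `C`, either `x b b'` is a triangle or `x b v_{j+1} v_{j+2} b'` is an induced 5-cycle.
Hence the indices `j` with `N(x) ∩ B_j ≠ ∅` pairwise differ by `0` or `±2` modulo 7, and any such
set of residues lies in a pair `{i - 1, i + 1}`.
-/

theorem hasInducedCycle_three_of_adj {V : Type*} {G : SimpleGraph V} {a b d : V}
    (hab : G.Adj a b) (hbd : G.Adj b d) (hda : G.Adj d a) : HasInducedCycle G 3 := by
  have hall : ∀ i : ZMod 3, i = 0 ∨ i = 1 ∨ i = 2 := by decide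
  refine ⟨![a, b, d], fun i j h => ?_, fun i j => ?_⟩ <;>
    rcases hall i with rfl | rfl | rfl <;> rcases hall j with rfl | rfl | rfl
  all_goals simp_all [hab.ne, hbd.ne, hda.ne, hab.symm, hbd.symm, hda.symm, eq_comm] <;> decide

theorem hasInducedCycle_five_of_adj {V : Type*} {G : SimpleGraph V} {p q r s t : V}
    (hpq : G.Adj p q) (hqr : G.Adj q r) (hrs : G.Adj r s) (hst : G.Adj s t) (htp : G.Adj t p)
    (hpr : ¬ G.Adj p r) (hps : ¬ G.Adj p s) (hqs : ¬ G.Adj q s) (hqt : ¬ G.Adj q t)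
    (hrt : ¬ G.Adj r t) : HasInducedCycle G 5 := by
  have hpr' : p ≠ r := by rintro rfl; exact hps hrs
  have hps' : p ≠ s := by rintro rfl; exact hpr hrs.symm
  have hqs' : q ≠ s := by rintro rfl; exact hps hpq
  have hqt' : q ≠ t := by rintro rfl; exact hrt hqr.symm
  have hrt' : r ≠ t := by rintro rfl; exact hqt hqr
  have hall : ∀ i : ZMod 5, i = 0 ∨ i = 1 ∨ i = 2 ∨ i = 3 ∨ i = 4 := by decide
  refine ⟨![p, q, r, s, t], fun i j h => ?_, fun i j => ?_⟩ <;>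
    rcases hall i with rfl | rfl | rfl | rfl | rfl <;>
    rcases hall j with rfl | rfl | rfl | rfl | rfl
  all_goals simp_all [hpq.ne, hqr.ne, hrs.ne, hst.ne, htp.ne, hpq.symm, hqr.symm, hrs.symm,
    hst.symm, htp.symm, G.adj_comm, eq_comm] <;> decide

theorem adj_or_adj_of_adj_ends {V : Type*} {G : SimpleGraph V} (h3 : ¬ HasInducedCycle G 3)
    (h5 : ¬ HasInducedCycle G 5) {x b u v b' : V} (hbu : G.Adj b u) (huv : G.Adj u v)
    (hvb' : G.Adj v b') (hbv : ¬ G.Adj b v) (hub' : ¬ G.Adj u b') (hxb : G.Adj x b)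
    (hxb' : G.Adj x b') : G.Adj x u ∨ G.Adj x v := by
  by_contra! ⟨hxu, hxv⟩
  by_cases hbb' : G.Adj b b'
  · exact h3 (hasInducedCycle_three_of_adj hxb hbb' hxb'.symm)
  · exact h5 (hasInducedCycle_five_of_adj hxb hbu huv hvb' hxb'.symm hxu hxv hbv hbb' hub')

theorem ZMod.exists_forall_eq_sub_one_or_eq_add_one (S : Set (ZMod 7))
    (hS : ∀ j ∈ S, ∀ k ∈ S, k ≠ j + 1 ∧ k ≠ j + 3) : ∃ i, ∀ k ∈ S, k = i - 1 ∨ k = i + 1 := by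
  rcases S.eq_empty_or_nonempty with rfl | ⟨j, hj⟩
  · exact ⟨0, fun _ => False.elim⟩
  have hnear : ∀ k ∈ S, k = j - 2 ∨ k = j ∨ k = j + 2 := fun k hk =>
    (by decide : ∀ j k : ZMod 7, k ≠ j + 1 ∧ k ≠ j + 3 → j ≠ k + 1 ∧ j ≠ k + 3 →
      k = j - 2 ∨ k = j ∨ k = j + 2) j k (hS j hj k hk) (hS k hk j hj)
  by_cases h2 : j + 2 ∈ S
  · refine ⟨j + 1, fun k hk => ?_⟩
    rcases hnear k hk with rfl | rfl | rfl
    · exact absurd (by grind : j - 2 = j + 2 + 3) (hS _ h2 _ hk).2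
    · exact Or.inl (by ring)
    · exact Or.inr (by ring)
  · refine ⟨j - 1, fun k hk => ?_⟩
    rcases hnear k hk with rfl | rfl | rfl
    · exact Or.inl (by ring)
    · exact Or.inr (by ring)
    · exact absurd hk h2

section InducedSevenCycle

variable {V : Type*} {G : SimpleGraph V} {c : ZMod 7 → V}

theorem distToCycle_le_one_of_adj {x : V} {i : ZMod 7} (h : G.Adj x (c i)) :
    distToCycle G c x ≤ 1 :=
  calc distToCycle G c x ≤ G.dist x (c i) := Nat.sInf_le ⟨i, rfl⟩
    _ = 1 := dist_eq_one_iff_adj.2 h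

theorem adj_iff_of_mem_Bset (hc : Function.Injective c) {j : ZMod 7} {b : V}
    (hb : b ∈ Bset G c j) (k : ZMod 7) : G.Adj b (c k) ↔ k = j - 1 ∨ k = j + 1 := by
  simpa [hc.eq_iff] using Set.ext_iff.1 hb (c k)

theorem not_adj_of_mem_Bset (hc : IsInducedCycle G 7 c) (h3 : ¬ HasInducedCycle G 3)
    (h5 : ¬ HasInducedCycle G 5) {x b b' : V} (hxc : ∀ i, ¬ G.Adj x (c i)) {j k : ZMod 7}
    (hb : b ∈ Bset G c j) (hb' : b' ∈ Bset G c k) (hjk : k = j + 1 ∨ k = j + 3)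
    (hxb : G.Adj x b) : ¬ G.Adj x b' := by
  have hb1 : G.Adj b (c (j + 1)) := (adj_iff_of_mem_Bset hc.1 hb _).2 (Or.inr rfl)
  have hb2 : ¬ G.Adj b (c (j + 2)) := by rw [adj_iff_of_mem_Bset hc.1 hb]; grind
  have hb'1 : ¬ G.Adj b' (c (j + 1)) := by
    rw [adj_iff_of_mem_Bset hc.1 hb']; rcases hjk with rfl | rfl <;> grind
  have hb'2 : G.Adj b' (c (j + 2)) := by
    rw [adj_iff_of_mem_Bset hc.1 hb']; rcases hjk with rfl | rfl <;> grind
  have hcc : G.Adj (c (j + 1)) (c (j + 2)) := (hc.2 _ _).2 (Or.inr (by ring))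
  intro hxb'
  exact (adj_or_adj_of_adj_ends h3 h5 hb1 hcc hb'2.symm hb2 (fun h => hb'1 h.symm) hxb
    hxb').elim (hxc _) (hxc _)

end InducedSevenCycle

theorem stmt7_general {V : Type*} (G : SimpleGraph V)
    (h3 : ¬ HasInducedCycle G 3) (h5 : ¬ HasInducedCycle G 5)
    (c : ZMod 7 → V) (hc : IsInducedCycle G 7 c)
    (x : V) (hx : distToCycle G c x = 2) :
    ∃ i : ZMod 7, ∀ b : V, G.Adj x b → (∃ j : ZMod 7, b ∈ Bset G c j) →
      b ∈ Bset G c (i - 1) ∪ Bset G c (i + 1) := by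
  have hxc : ∀ i, ¬ G.Adj x (c i) := fun i h => by
    have := distToCycle_le_one_of_adj h; omega
  obtain ⟨i, hi⟩ := ZMod.exists_forall_eq_sub_one_or_eq_add_one
    {j | ∃ b, G.Adj x b ∧ b ∈ Bset G c j} (by
      rintro j ⟨b, hxb, hb⟩ k ⟨b', hxb', hb'⟩
      exact ⟨fun h => not_adj_of_mem_Bset hc h3 h5 hxc hb hb' (Or.inl h) hxb hxb',
        fun h => not_adj_of_mem_Bset hc h3 h5 hxc hb hb' (Or.inr h) hxb hxb'⟩)
  refine ⟨i, fun b hxb ⟨j, hb⟩ => ?_⟩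
  rcases hi j ⟨b, hxb, hb⟩ with rfl | rfl
  · exact Or.inl hb
  · exact Or.inr hb

theorem stmt7 {V : Type*} [Fintype V] (G : SimpleGraph V)
    (h3 : ¬ HasInducedCycle G 3) (h5 : ¬ HasInducedCycle G 5)
    (c : ZMod 7 → V) (hc : IsInducedCycle G 7 c)
    (x : V) (hx : distToCycle G c x = 2) :
    ∃ i : ZMod 7, ∀ b : V, G.Adj x b → (∃ j : ZMod 7, b ∈ Bset G c j) →
      b ∈ Bset G c (i - 1) ∪ Bset G c (i + 1) :=
  stmt7_general G h3 h5 c hc x hx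
end

section
/- Let G be a P10-free graph with all induced odd cycles of length 7, no comparable pair, and C an induced 7-cycle. For every induced path a-b-c on three vertices lying entirely outside the closed neighborhood of C, the endpoints a and c have the same set of neighbors in A, where A is the set of vertices with exactly one neighbor on C. -/
open SimpleGraph

lemma noTriangle {V : Type*} (G : SimpleGraph V) (hodd : OddCyclesAre7 G)
    {x y z : V} (hxy : G.Adj x y) (hyz : G.Adj y z) (hxz : G.Adj x z) : False := by
  have hyx := hxy.symm; have hzy := hyz.symm; have hzx := hxz.symm
  have hall : ∀ s : ZMod 3, s = 0 ∨ s = 1 ∨ s = 2 := by decide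
  have hA : ∀ s t : ZMod 3, s ≠ t → (s = t + 1 ∨ t = s + 1) := by decide
  have hB : ∀ s t : ZMod 3, (s = t + 1 ∨ t = s + 1) → s ≠ t := by decide
  set c3 : ZMod 3 → V := fun t => if t = 0 then x else if t = 1 then y else z with hc3
  have e0 : c3 0 = x := by simp [hc3]
  have e1 : c3 1 = y := by simp [hc3]
  have e2 : c3 2 = z := by simp only [hc3]; rw [if_neg (by decide), if_neg (by decide)]
  have hC : ∀ s t : ZMod 3, s ≠ t → G.Adj (c3 s) (c3 t) := by
    intro s t hst
    rcases hall s with rfl | rfl | rfl <;> rcases hall t with rfl | rfl | rfl <;>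
      simp only [e0, e1, e2] <;>
      first
      | exact absurd rfl hst
      | assumption
  have hinj : Function.Injective c3 := by
    intro s t h
    by_contra hst
    exact (hC s t hst).ne h
  have h7 : (3 : ℕ) = 7 := by
    refine hodd 3 le_rfl (by decide) ⟨c3, hinj, fun s t => ⟨fun hadj => ?_, fun h => hC s t (hB s t h)⟩⟩
    refine hA s t fun hst => ?_
    rw [hst] at hadj
    exact G.irrefl hadj
  norm_num at h7

lemma keyLemma {V : Type*} (G : SimpleGraph V)
    (hP : ¬ HasInducedPath G 10) (hodd : OddCyclesAre7 G)
    (c : ZMod 7 → V) (hc : IsInducedCycle G 7 c)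
    (a b d : V)
    (ha : a ∉ closedNbhd G c) (hb : b ∉ closedNbhd G c) (hd : d ∉ closedNbhd G c)
    (hab : G.Adj a b) (hbd : G.Adj b d) (had : ¬ G.Adj a d) (hne : a ≠ d)
    (w : V) (i : ZMod 7) (hw : w ∈ Aset G c i)
    (haw : G.Adj a w) (hdw : ¬ G.Adj d w) : False := by
  obtain ⟨hcinj, hcAdj⟩ := hc
  have hw' : G.neighborSet w ∩ Set.range c = {c i} := hw
  have haR : a ∉ Set.range c := fun h => ha (Set.mem_union_left _ h)
  have haC : ∀ j, ¬ G.Adj a (c j) := fun j h => ha (Set.mem_union_right _ ⟨j, h⟩)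
  have hbR : b ∉ Set.range c := fun h => hb (Set.mem_union_left _ h)
  have hbC : ∀ j, ¬ G.Adj b (c j) := fun j h => hb (Set.mem_union_right _ ⟨j, h⟩)
  have hdR : d ∉ Set.range c := fun h => hd (Set.mem_union_left _ h)
  have hdC : ∀ j, ¬ G.Adj d (c j) := fun j h => hd (Set.mem_union_right _ ⟨j, h⟩)
  have hcadj : ∀ k l : ZMod 7, G.Adj (c (i + k)) (c (i + l)) ↔ (k = l + 1 ∨ l = k + 1) := by
    intro k l
    rw [hcAdj]
    simp only [add_assoc, add_right_inj]
  have hcne : ∀ k l : ZMod 7, k ≠ l → c (i + k) ≠ c (i + l) :=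
    fun k l hkl h => hkl (add_left_cancel (hcinj h))
  have h1 : G.Adj w (c i) := by
    have hm : c i ∈ G.neighborSet w ∩ Set.range c := by
      rw [hw']; exact Set.mem_singleton _
    exact hm.1
  have hwadj : G.Adj w (c (i + 0)) := by rw [add_zero]; exact h1
  have hwN : ∀ k : ZMod 7, k ≠ 0 → ¬ G.Adj w (c (i + k)) := by
    intro k hk hadj
    have hm : c (i + k) ∈ G.neighborSet w ∩ Set.range c := ⟨hadj, ⟨i + k, rfl⟩⟩
    rw [hw'] at hm
    exact hk (add_eq_left.mp (hcinj hm))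
  have hnrw : w ∉ Set.range c := by
    rintro ⟨j, rfl⟩
    have h2 : G.Adj (c j) (c (j + 1)) := (hcAdj j (j + 1)).mpr (Or.inr rfl)
    have h3 : G.Adj (c j) (c (j - 1)) := (hcAdj j (j - 1)).mpr (Or.inl (by ring))
    have m2 : c (j + 1) ∈ ({c i} : Set V) := by rw [← hw']; exact ⟨h2, j + 1, rfl⟩
    have m3 : c (j - 1) ∈ ({c i} : Set V) := by rw [← hw']; exact ⟨h3, j - 1, rfl⟩
    have e2 : j + 1 = i := hcinj m2
    have e3 : j - 1 = i := hcinj m3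
    have e4 : j + 1 = j - 1 := by rw [e2, e3]
    have e5 : (2 : ZMod 7) = 0 := by linear_combination e4
    exact absurd e5 (by decide)
  have hbw : ¬ G.Adj b w := fun h => noTriangle G hodd hab h haw
  have hA01 : G.Adj (d) (b) := hbd.symm
  have hA10 : G.Adj (b) (d) := hA01.symm
  have hA02 : ¬ G.Adj (d) (a) := fun h => had h.symm
  have hA20 : ¬ G.Adj (a) (d) := fun h => hA02 h.symm
  have hA03 : ¬ G.Adj (d) (w) := hdw
  have hA30 : ¬ G.Adj (w) (d) := fun h => hA03 h.symm
  have hA04 : ¬ G.Adj (d) (c (i + 0)) := hdC (i + 0)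
  have hA40 : ¬ G.Adj (c (i + 0)) (d) := fun h => hA04 h.symm
  have hA05 : ¬ G.Adj (d) (c (i + 1)) := hdC (i + 1)
  have hA50 : ¬ G.Adj (c (i + 1)) (d) := fun h => hA05 h.symm
  have hA06 : ¬ G.Adj (d) (c (i + 2)) := hdC (i + 2)
  have hA60 : ¬ G.Adj (c (i + 2)) (d) := fun h => hA06 h.symm
  have hA07 : ¬ G.Adj (d) (c (i + 3)) := hdC (i + 3)
  have hA70 : ¬ G.Adj (c (i + 3)) (d) := fun h => hA07 h.symm
  have hA08 : ¬ G.Adj (d) (c (i + 4)) := hdC (i + 4)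
  have hA80 : ¬ G.Adj (c (i + 4)) (d) := fun h => hA08 h.symm
  have hA09 : ¬ G.Adj (d) (c (i + 5)) := hdC (i + 5)
  have hA90 : ¬ G.Adj (c (i + 5)) (d) := fun h => hA09 h.symm
  have hA12 : G.Adj (b) (a) := hab.symm
  have hA21 : G.Adj (a) (b) := hA12.symm
  have hA13 : ¬ G.Adj (b) (w) := hbw
  have hA31 : ¬ G.Adj (w) (b) := fun h => hA13 h.symm
  have hA14 : ¬ G.Adj (b) (c (i + 0)) := hbC (i + 0)
  have hA41 : ¬ G.Adj (c (i + 0)) (b) := fun h => hA14 h.symm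
  have hA15 : ¬ G.Adj (b) (c (i + 1)) := hbC (i + 1)
  have hA51 : ¬ G.Adj (c (i + 1)) (b) := fun h => hA15 h.symm
  have hA16 : ¬ G.Adj (b) (c (i + 2)) := hbC (i + 2)
  have hA61 : ¬ G.Adj (c (i + 2)) (b) := fun h => hA16 h.symm
  have hA17 : ¬ G.Adj (b) (c (i + 3)) := hbC (i + 3)
  have hA71 : ¬ G.Adj (c (i + 3)) (b) := fun h => hA17 h.symm
  have hA18 : ¬ G.Adj (b) (c (i + 4)) := hbC (i + 4)
  have hA81 : ¬ G.Adj (c (i + 4)) (b) := fun h => hA18 h.symm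
  have hA19 : ¬ G.Adj (b) (c (i + 5)) := hbC (i + 5)
  have hA91 : ¬ G.Adj (c (i + 5)) (b) := fun h => hA19 h.symm
  have hA23 : G.Adj (a) (w) := haw
  have hA32 : G.Adj (w) (a) := hA23.symm
  have hA24 : ¬ G.Adj (a) (c (i + 0)) := haC (i + 0)
  have hA42 : ¬ G.Adj (c (i + 0)) (a) := fun h => hA24 h.symm
  have hA25 : ¬ G.Adj (a) (c (i + 1)) := haC (i + 1)
  have hA52 : ¬ G.Adj (c (i + 1)) (a) := fun h => hA25 h.symm
  have hA26 : ¬ G.Adj (a) (c (i + 2)) := haC (i + 2)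
  have hA62 : ¬ G.Adj (c (i + 2)) (a) := fun h => hA26 h.symm
  have hA27 : ¬ G.Adj (a) (c (i + 3)) := haC (i + 3)
  have hA72 : ¬ G.Adj (c (i + 3)) (a) := fun h => hA27 h.symm
  have hA28 : ¬ G.Adj (a) (c (i + 4)) := haC (i + 4)
  have hA82 : ¬ G.Adj (c (i + 4)) (a) := fun h => hA28 h.symm
  have hA29 : ¬ G.Adj (a) (c (i + 5)) := haC (i + 5)
  have hA92 : ¬ G.Adj (c (i + 5)) (a) := fun h => hA29 h.symm
  have hA34 : G.Adj (w) (c (i + 0)) := hwadj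
  have hA43 : G.Adj (c (i + 0)) (w) := hA34.symm
  have hA35 : ¬ G.Adj (w) (c (i + 1)) := hwN 1 (by decide)
  have hA53 : ¬ G.Adj (c (i + 1)) (w) := fun h => hA35 h.symm
  have hA36 : ¬ G.Adj (w) (c (i + 2)) := hwN 2 (by decide)
  have hA63 : ¬ G.Adj (c (i + 2)) (w) := fun h => hA36 h.symm
  have hA37 : ¬ G.Adj (w) (c (i + 3)) := hwN 3 (by decide)
  have hA73 : ¬ G.Adj (c (i + 3)) (w) := fun h => hA37 h.symm
  have hA38 : ¬ G.Adj (w) (c (i + 4)) := hwN 4 (by decide)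
  have hA83 : ¬ G.Adj (c (i + 4)) (w) := fun h => hA38 h.symm
  have hA39 : ¬ G.Adj (w) (c (i + 5)) := hwN 5 (by decide)
  have hA93 : ¬ G.Adj (c (i + 5)) (w) := fun h => hA39 h.symm
  have hA45 : G.Adj (c (i + 0)) (c (i + 1)) := (hcadj 0 1).mpr (by decide)
  have hA54 : G.Adj (c (i + 1)) (c (i + 0)) := hA45.symm
  have hA46 : ¬ G.Adj (c (i + 0)) (c (i + 2)) := by intro h; have hx := (hcadj 0 2).mp h; revert hx; decide
  have hA64 : ¬ G.Adj (c (i + 2)) (c (i + 0)) := fun h => hA46 h.symm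
  have hA47 : ¬ G.Adj (c (i + 0)) (c (i + 3)) := by intro h; have hx := (hcadj 0 3).mp h; revert hx; decide
  have hA74 : ¬ G.Adj (c (i + 3)) (c (i + 0)) := fun h => hA47 h.symm
  have hA48 : ¬ G.Adj (c (i + 0)) (c (i + 4)) := by intro h; have hx := (hcadj 0 4).mp h; revert hx; decide
  have hA84 : ¬ G.Adj (c (i + 4)) (c (i + 0)) := fun h => hA48 h.symm
  have hA49 : ¬ G.Adj (c (i + 0)) (c (i + 5)) := by intro h; have hx := (hcadj 0 5).mp h; revert hx; decide
  have hA94 : ¬ G.Adj (c (i + 5)) (c (i + 0)) := fun h => hA49 h.symm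
  have hA56 : G.Adj (c (i + 1)) (c (i + 2)) := (hcadj 1 2).mpr (by decide)
  have hA65 : G.Adj (c (i + 2)) (c (i + 1)) := hA56.symm
  have hA57 : ¬ G.Adj (c (i + 1)) (c (i + 3)) := by intro h; have hx := (hcadj 1 3).mp h; revert hx; decide
  have hA75 : ¬ G.Adj (c (i + 3)) (c (i + 1)) := fun h => hA57 h.symm
  have hA58 : ¬ G.Adj (c (i + 1)) (c (i + 4)) := by intro h; have hx := (hcadj 1 4).mp h; revert hx; decide
  have hA85 : ¬ G.Adj (c (i + 4)) (c (i + 1)) := fun h => hA58 h.symm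
  have hA59 : ¬ G.Adj (c (i + 1)) (c (i + 5)) := by intro h; have hx := (hcadj 1 5).mp h; revert hx; decide
  have hA95 : ¬ G.Adj (c (i + 5)) (c (i + 1)) := fun h => hA59 h.symm
  have hA67 : G.Adj (c (i + 2)) (c (i + 3)) := (hcadj 2 3).mpr (by decide)
  have hA76 : G.Adj (c (i + 3)) (c (i + 2)) := hA67.symm
  have hA68 : ¬ G.Adj (c (i + 2)) (c (i + 4)) := by intro h; have hx := (hcadj 2 4).mp h; revert hx; decide
  have hA86 : ¬ G.Adj (c (i + 4)) (c (i + 2)) := fun h => hA68 h.symm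
  have hA69 : ¬ G.Adj (c (i + 2)) (c (i + 5)) := by intro h; have hx := (hcadj 2 5).mp h; revert hx; decide
  have hA96 : ¬ G.Adj (c (i + 5)) (c (i + 2)) := fun h => hA69 h.symm
  have hA78 : G.Adj (c (i + 3)) (c (i + 4)) := (hcadj 3 4).mpr (by decide)
  have hA87 : G.Adj (c (i + 4)) (c (i + 3)) := hA78.symm
  have hA79 : ¬ G.Adj (c (i + 3)) (c (i + 5)) := by intro h; have hx := (hcadj 3 5).mp h; revert hx; decide
  have hA97 : ¬ G.Adj (c (i + 5)) (c (i + 3)) := fun h => hA79 h.symm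
  have hA89 : G.Adj (c (i + 4)) (c (i + 5)) := (hcadj 4 5).mpr (by decide)
  have hA98 : G.Adj (c (i + 5)) (c (i + 4)) := hA89.symm
  have hE01 : (d) ≠ (b) := hbd.symm.ne
  have hE10 : (b) ≠ (d) := hE01.symm
  have hE02 : (d) ≠ (a) := hne.symm
  have hE20 : (a) ≠ (d) := hE02.symm
  have hE03 : (d) ≠ (w) := by intro h; exact hdC (i + 0) (by rw [h]; exact hwadj)
  have hE30 : (w) ≠ (d) := hE03.symm
  have hE04 : (d) ≠ (c (i + 0)) := fun h => hdR ⟨i + 0, h.symm⟩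
  have hE40 : (c (i + 0)) ≠ (d) := hE04.symm
  have hE05 : (d) ≠ (c (i + 1)) := fun h => hdR ⟨i + 1, h.symm⟩
  have hE50 : (c (i + 1)) ≠ (d) := hE05.symm
  have hE06 : (d) ≠ (c (i + 2)) := fun h => hdR ⟨i + 2, h.symm⟩
  have hE60 : (c (i + 2)) ≠ (d) := hE06.symm
  have hE07 : (d) ≠ (c (i + 3)) := fun h => hdR ⟨i + 3, h.symm⟩
  have hE70 : (c (i + 3)) ≠ (d) := hE07.symm
  have hE08 : (d) ≠ (c (i + 4)) := fun h => hdR ⟨i + 4, h.symm⟩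
  have hE80 : (c (i + 4)) ≠ (d) := hE08.symm
  have hE09 : (d) ≠ (c (i + 5)) := fun h => hdR ⟨i + 5, h.symm⟩
  have hE90 : (c (i + 5)) ≠ (d) := hE09.symm
  have hE12 : (b) ≠ (a) := hab.symm.ne
  have hE21 : (a) ≠ (b) := hE12.symm
  have hE13 : (b) ≠ (w) := by intro h; exact hbC (i + 0) (by rw [h]; exact hwadj)
  have hE31 : (w) ≠ (b) := hE13.symm
  have hE14 : (b) ≠ (c (i + 0)) := fun h => hbR ⟨i + 0, h.symm⟩
  have hE41 : (c (i + 0)) ≠ (b) := hE14.symm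
  have hE15 : (b) ≠ (c (i + 1)) := fun h => hbR ⟨i + 1, h.symm⟩
  have hE51 : (c (i + 1)) ≠ (b) := hE15.symm
  have hE16 : (b) ≠ (c (i + 2)) := fun h => hbR ⟨i + 2, h.symm⟩
  have hE61 : (c (i + 2)) ≠ (b) := hE16.symm
  have hE17 : (b) ≠ (c (i + 3)) := fun h => hbR ⟨i + 3, h.symm⟩
  have hE71 : (c (i + 3)) ≠ (b) := hE17.symm
  have hE18 : (b) ≠ (c (i + 4)) := fun h => hbR ⟨i + 4, h.symm⟩
  have hE81 : (c (i + 4)) ≠ (b) := hE18.symm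
  have hE19 : (b) ≠ (c (i + 5)) := fun h => hbR ⟨i + 5, h.symm⟩
  have hE91 : (c (i + 5)) ≠ (b) := hE19.symm
  have hE23 : (a) ≠ (w) := haw.ne
  have hE32 : (w) ≠ (a) := hE23.symm
  have hE24 : (a) ≠ (c (i + 0)) := fun h => haR ⟨i + 0, h.symm⟩
  have hE42 : (c (i + 0)) ≠ (a) := hE24.symm
  have hE25 : (a) ≠ (c (i + 1)) := fun h => haR ⟨i + 1, h.symm⟩
  have hE52 : (c (i + 1)) ≠ (a) := hE25.symm
  have hE26 : (a) ≠ (c (i + 2)) := fun h => haR ⟨i + 2, h.symm⟩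
  have hE62 : (c (i + 2)) ≠ (a) := hE26.symm
  have hE27 : (a) ≠ (c (i + 3)) := fun h => haR ⟨i + 3, h.symm⟩
  have hE72 : (c (i + 3)) ≠ (a) := hE27.symm
  have hE28 : (a) ≠ (c (i + 4)) := fun h => haR ⟨i + 4, h.symm⟩
  have hE82 : (c (i + 4)) ≠ (a) := hE28.symm
  have hE29 : (a) ≠ (c (i + 5)) := fun h => haR ⟨i + 5, h.symm⟩
  have hE92 : (c (i + 5)) ≠ (a) := hE29.symm
  have hE34 : (w) ≠ (c (i + 0)) := fun h => hnrw ⟨i + 0, h.symm⟩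
  have hE43 : (c (i + 0)) ≠ (w) := hE34.symm
  have hE35 : (w) ≠ (c (i + 1)) := fun h => hnrw ⟨i + 1, h.symm⟩
  have hE53 : (c (i + 1)) ≠ (w) := hE35.symm
  have hE36 : (w) ≠ (c (i + 2)) := fun h => hnrw ⟨i + 2, h.symm⟩
  have hE63 : (c (i + 2)) ≠ (w) := hE36.symm
  have hE37 : (w) ≠ (c (i + 3)) := fun h => hnrw ⟨i + 3, h.symm⟩
  have hE73 : (c (i + 3)) ≠ (w) := hE37.symm
  have hE38 : (w) ≠ (c (i + 4)) := fun h => hnrw ⟨i + 4, h.symm⟩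
  have hE83 : (c (i + 4)) ≠ (w) := hE38.symm
  have hE39 : (w) ≠ (c (i + 5)) := fun h => hnrw ⟨i + 5, h.symm⟩
  have hE93 : (c (i + 5)) ≠ (w) := hE39.symm
  have hE45 : (c (i + 0)) ≠ (c (i + 1)) := hcne 0 1 (by decide)
  have hE54 : (c (i + 1)) ≠ (c (i + 0)) := hE45.symm
  have hE46 : (c (i + 0)) ≠ (c (i + 2)) := hcne 0 2 (by decide)
  have hE64 : (c (i + 2)) ≠ (c (i + 0)) := hE46.symm
  have hE47 : (c (i + 0)) ≠ (c (i + 3)) := hcne 0 3 (by decide)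
  have hE74 : (c (i + 3)) ≠ (c (i + 0)) := hE47.symm
  have hE48 : (c (i + 0)) ≠ (c (i + 4)) := hcne 0 4 (by decide)
  have hE84 : (c (i + 4)) ≠ (c (i + 0)) := hE48.symm
  have hE49 : (c (i + 0)) ≠ (c (i + 5)) := hcne 0 5 (by decide)
  have hE94 : (c (i + 5)) ≠ (c (i + 0)) := hE49.symm
  have hE56 : (c (i + 1)) ≠ (c (i + 2)) := hcne 1 2 (by decide)
  have hE65 : (c (i + 2)) ≠ (c (i + 1)) := hE56.symm
  have hE57 : (c (i + 1)) ≠ (c (i + 3)) := hcne 1 3 (by decide)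
  have hE75 : (c (i + 3)) ≠ (c (i + 1)) := hE57.symm
  have hE58 : (c (i + 1)) ≠ (c (i + 4)) := hcne 1 4 (by decide)
  have hE85 : (c (i + 4)) ≠ (c (i + 1)) := hE58.symm
  have hE59 : (c (i + 1)) ≠ (c (i + 5)) := hcne 1 5 (by decide)
  have hE95 : (c (i + 5)) ≠ (c (i + 1)) := hE59.symm
  have hE67 : (c (i + 2)) ≠ (c (i + 3)) := hcne 2 3 (by decide)
  have hE76 : (c (i + 3)) ≠ (c (i + 2)) := hE67.symm
  have hE68 : (c (i + 2)) ≠ (c (i + 4)) := hcne 2 4 (by decide)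
  have hE86 : (c (i + 4)) ≠ (c (i + 2)) := hE68.symm
  have hE69 : (c (i + 2)) ≠ (c (i + 5)) := hcne 2 5 (by decide)
  have hE96 : (c (i + 5)) ≠ (c (i + 2)) := hE69.symm
  have hE78 : (c (i + 3)) ≠ (c (i + 4)) := hcne 3 4 (by decide)
  have hE87 : (c (i + 4)) ≠ (c (i + 3)) := hE78.symm
  have hE79 : (c (i + 3)) ≠ (c (i + 5)) := hcne 3 5 (by decide)
  have hE97 : (c (i + 5)) ≠ (c (i + 3)) := hE79.symm
  have hE89 : (c (i + 4)) ≠ (c (i + 5)) := hcne 4 5 (by decide)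
  have hE98 : (c (i + 5)) ≠ (c (i + 4)) := hE89.symm

  refine hP ⟨![d, b, a, w, c (i + 0), c (i + 1), c (i + 2), c (i + 3), c (i + 4), c (i + 5)], ?_, ?_⟩
  · intro s t
    fin_cases s <;> fin_cases t
    · intro _; rfl
    · intro h; exact absurd h hE01
    · intro h; exact absurd h hE02
    · intro h; exact absurd h hE03
    · intro h; exact absurd h hE04
    · intro h; exact absurd h hE05
    · intro h; exact absurd h hE06
    · intro h; exact absurd h hE07
    · intro h; exact absurd h hE08
    · intro h; exact absurd h hE09
    · intro h; exact absurd h hE10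
    · intro _; rfl
    · intro h; exact absurd h hE12
    · intro h; exact absurd h hE13
    · intro h; exact absurd h hE14
    · intro h; exact absurd h hE15
    · intro h; exact absurd h hE16
    · intro h; exact absurd h hE17
    · intro h; exact absurd h hE18
    · intro h; exact absurd h hE19
    · intro h; exact absurd h hE20
    · intro h; exact absurd h hE21
    · intro _; rfl
    · intro h; exact absurd h hE23
    · intro h; exact absurd h hE24
    · intro h; exact absurd h hE25
    · intro h; exact absurd h hE26
    · intro h; exact absurd h hE27
    · intro h; exact absurd h hE28
    · intro h; exact absurd h hE29
    · intro h; exact absurd h hE30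
    · intro h; exact absurd h hE31
    · intro h; exact absurd h hE32
    · intro _; rfl
    · intro h; exact absurd h hE34
    · intro h; exact absurd h hE35
    · intro h; exact absurd h hE36
    · intro h; exact absurd h hE37
    · intro h; exact absurd h hE38
    · intro h; exact absurd h hE39
    · intro h; exact absurd h hE40
    · intro h; exact absurd h hE41
    · intro h; exact absurd h hE42
    · intro h; exact absurd h hE43
    · intro _; rfl
    · intro h; exact absurd h hE45
    · intro h; exact absurd h hE46
    · intro h; exact absurd h hE47
    · intro h; exact absurd h hE48
    · intro h; exact absurd h hE49
    · intro h; exact absurd h hE50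
    · intro h; exact absurd h hE51
    · intro h; exact absurd h hE52
    · intro h; exact absurd h hE53
    · intro h; exact absurd h hE54
    · intro _; rfl
    · intro h; exact absurd h hE56
    · intro h; exact absurd h hE57
    · intro h; exact absurd h hE58
    · intro h; exact absurd h hE59
    · intro h; exact absurd h hE60
    · intro h; exact absurd h hE61
    · intro h; exact absurd h hE62
    · intro h; exact absurd h hE63
    · intro h; exact absurd h hE64
    · intro h; exact absurd h hE65
    · intro _; rfl
    · intro h; exact absurd h hE67
    · intro h; exact absurd h hE68
    · intro h; exact absurd h hE69
    · intro h; exact absurd h hE70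
    · intro h; exact absurd h hE71
    · intro h; exact absurd h hE72
    · intro h; exact absurd h hE73
    · intro h; exact absurd h hE74
    · intro h; exact absurd h hE75
    · intro h; exact absurd h hE76
    · intro _; rfl
    · intro h; exact absurd h hE78
    · intro h; exact absurd h hE79
    · intro h; exact absurd h hE80
    · intro h; exact absurd h hE81
    · intro h; exact absurd h hE82
    · intro h; exact absurd h hE83
    · intro h; exact absurd h hE84
    · intro h; exact absurd h hE85
    · intro h; exact absurd h hE86
    · intro h; exact absurd h hE87
    · intro _; rfl
    · intro h; exact absurd h hE89
    · intro h; exact absurd h hE90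
    · intro h; exact absurd h hE91
    · intro h; exact absurd h hE92
    · intro h; exact absurd h hE93
    · intro h; exact absurd h hE94
    · intro h; exact absurd h hE95
    · intro h; exact absurd h hE96
    · intro h; exact absurd h hE97
    · intro h; exact absurd h hE98
    · intro _; rfl
  · intro s t
    fin_cases s <;> fin_cases t
    · exact iff_of_false (G.irrefl) (by decide)
    · exact iff_of_true hA01 (by decide)
    · exact iff_of_false hA02 (by decide)
    · exact iff_of_false hA03 (by decide)
    · exact iff_of_false hA04 (by decide)
    · exact iff_of_false hA05 (by decide)
    · exact iff_of_false hA06 (by decide)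
    · exact iff_of_false hA07 (by decide)
    · exact iff_of_false hA08 (by decide)
    · exact iff_of_false hA09 (by decide)
    · exact iff_of_true hA10 (by decide)
    · exact iff_of_false (G.irrefl) (by decide)
    · exact iff_of_true hA12 (by decide)
    · exact iff_of_false hA13 (by decide)
    · exact iff_of_false hA14 (by decide)
    · exact iff_of_false hA15 (by decide)
    · exact iff_of_false hA16 (by decide)
    · exact iff_of_false hA17 (by decide)
    · exact iff_of_false hA18 (by decide)
    · exact iff_of_false hA19 (by decide)
    · exact iff_of_false hA20 (by decide)
    · exact iff_of_true hA21 (by decide)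
    · exact iff_of_false (G.irrefl) (by decide)
    · exact iff_of_true hA23 (by decide)
    · exact iff_of_false hA24 (by decide)
    · exact iff_of_false hA25 (by decide)
    · exact iff_of_false hA26 (by decide)
    · exact iff_of_false hA27 (by decide)
    · exact iff_of_false hA28 (by decide)
    · exact iff_of_false hA29 (by decide)
    · exact iff_of_false hA30 (by decide)
    · exact iff_of_false hA31 (by decide)
    · exact iff_of_true hA32 (by decide)
    · exact iff_of_false (G.irrefl) (by decide)
    · exact iff_of_true hA34 (by decide)
    · exact iff_of_false hA35 (by decide)
    · exact iff_of_false hA36 (by decide)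
    · exact iff_of_false hA37 (by decide)
    · exact iff_of_false hA38 (by decide)
    · exact iff_of_false hA39 (by decide)
    · exact iff_of_false hA40 (by decide)
    · exact iff_of_false hA41 (by decide)
    · exact iff_of_false hA42 (by decide)
    · exact iff_of_true hA43 (by decide)
    · exact iff_of_false (G.irrefl) (by decide)
    · exact iff_of_true hA45 (by decide)
    · exact iff_of_false hA46 (by decide)
    · exact iff_of_false hA47 (by decide)
    · exact iff_of_false hA48 (by decide)
    · exact iff_of_false hA49 (by decide)
    · exact iff_of_false hA50 (by decide)
    · exact iff_of_false hA51 (by decide)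
    · exact iff_of_false hA52 (by decide)
    · exact iff_of_false hA53 (by decide)
    · exact iff_of_true hA54 (by decide)
    · exact iff_of_false (G.irrefl) (by decide)
    · exact iff_of_true hA56 (by decide)
    · exact iff_of_false hA57 (by decide)
    · exact iff_of_false hA58 (by decide)
    · exact iff_of_false hA59 (by decide)
    · exact iff_of_false hA60 (by decide)
    · exact iff_of_false hA61 (by decide)
    · exact iff_of_false hA62 (by decide)
    · exact iff_of_false hA63 (by decide)
    · exact iff_of_false hA64 (by decide)
    · exact iff_of_true hA65 (by decide)
    · exact iff_of_false (G.irrefl) (by decide)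
    · exact iff_of_true hA67 (by decide)
    · exact iff_of_false hA68 (by decide)
    · exact iff_of_false hA69 (by decide)
    · exact iff_of_false hA70 (by decide)
    · exact iff_of_false hA71 (by decide)
    · exact iff_of_false hA72 (by decide)
    · exact iff_of_false hA73 (by decide)
    · exact iff_of_false hA74 (by decide)
    · exact iff_of_false hA75 (by decide)
    · exact iff_of_true hA76 (by decide)
    · exact iff_of_false (G.irrefl) (by decide)
    · exact iff_of_true hA78 (by decide)
    · exact iff_of_false hA79 (by decide)
    · exact iff_of_false hA80 (by decide)
    · exact iff_of_false hA81 (by decide)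
    · exact iff_of_false hA82 (by decide)
    · exact iff_of_false hA83 (by decide)
    · exact iff_of_false hA84 (by decide)
    · exact iff_of_false hA85 (by decide)
    · exact iff_of_false hA86 (by decide)
    · exact iff_of_true hA87 (by decide)
    · exact iff_of_false (G.irrefl) (by decide)
    · exact iff_of_true hA89 (by decide)
    · exact iff_of_false hA90 (by decide)
    · exact iff_of_false hA91 (by decide)
    · exact iff_of_false hA92 (by decide)
    · exact iff_of_false hA93 (by decide)
    · exact iff_of_false hA94 (by decide)
    · exact iff_of_false hA95 (by decide)
    · exact iff_of_false hA96 (by decide)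
    · exact iff_of_false hA97 (by decide)
    · exact iff_of_true hA98 (by decide)
    · exact iff_of_false (G.irrefl) (by decide)

theorem stmt8 {V : Type*} [Fintype V] (G : SimpleGraph V)
    (hP : ¬ HasInducedPath G 10) (hodd : OddCyclesAre7 G)
    (hcomp : NoComparablePair G)
    (c : ZMod 7 → V) (hc : IsInducedCycle G 7 c)
    (a b d : V)
    (ha : a ∉ closedNbhd G c) (hb : b ∉ closedNbhd G c) (hd : d ∉ closedNbhd G c)
    (hab : G.Adj a b) (hbd : G.Adj b d) (had : ¬ G.Adj a d) (hne : a ≠ d) :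
    ∀ w : V, (∃ i : ZMod 7, w ∈ Aset G c i) → (G.Adj a w ↔ G.Adj d w) := by
  intro w hwex
  obtain ⟨i, hw⟩ := hwex
  constructor
  · intro haw
    by_contra hdw
    exact keyLemma G hP hodd c hc a b d ha hb hd hab hbd had hne w i hw haw hdw
  · intro hdw
    by_contra haw
    exact keyLemma G hP hodd c hc d b a hd hb ha hbd.symm hab.symm (fun h => had h.symm)
      hne.symm w i hw hdw haw
end

section
/- Let G be a graph containing no induced C3, C5 or C9, let C = v1-...-v7 be an induced 7-cycle (indices mod 7), with A_i = {x : N(x)∩V(C) = {v_i}}. If a vertex v ∈ A_i has a neighbor u with u ∈ A_j, then j ∉ {i, i+2, i-2}; that is, two adjacent vertices cannot both have unique C-neighbors at cycle-distance 0 or 2. -/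
open SimpleGraph

-- auxiliary lemmas
lemma zne7 {a b : ZMod 7} (h : a - b ≠ 0) : a ≠ b := fun hh => h (by rw [hh, sub_self])

lemma aux_adj_iff {V : Type*} (G : SimpleGraph V) (c : ZMod 7 → V)
    (hinj : Function.Injective c) {i : ZMod 7} {x : V}
    (hx : G.neighborSet x ∩ Set.range c = {c i}) (k : ZMod 7) :
    G.Adj x (c k) ↔ k = i := by
  constructor
  · intro h
    have : c k ∈ G.neighborSet x ∩ Set.range c := ⟨h, ⟨k, rfl⟩⟩
    rw [hx] at this
    exact hinj this
  · intro h
    rw [h]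
    have : c i ∈ G.neighborSet x ∩ Set.range c := by rw [hx]; rfl
    exact this.1

lemma aux_not_range {V : Type*} (G : SimpleGraph V) (c : ZMod 7 → V)
    (hc : IsInducedCycle G 7 c) {i : ZMod 7} {x : V}
    (hx : G.neighborSet x ∩ Set.range c = {c i}) (k : ZMod 7) : x ≠ c k := by
  rintro rfl
  have h1 : G.Adj (c k) (c (k + 1)) := (hc.2 k (k+1)).2 (Or.inr rfl)
  have h2 : G.Adj (c k) (c (k - 1)) := (hc.2 k (k-1)).2 (Or.inl (by ring))
  have e1 : k + 1 = i := (aux_adj_iff G c hc.1 hx (k+1)).1 h1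
  have e2 : k - 1 = i := (aux_adj_iff G c hc.1 hx (k-1)).1 h2
  exact zne7 (by ring_nf; decide) (e1.trans e2.symm)

lemma aux_three {V : Type*} (G : SimpleGraph V)
    (c : ZMod 7 → V) (hc : IsInducedCycle G 7 c)
    (v u : V) (i : ZMod 7)
    (hv : G.neighborSet v ∩ Set.range c = {c i})
    (hu : G.neighborSet u ∩ Set.range c = {c i}) (hadj : G.Adj v u) :
    HasInducedCycle G 3 := by
  have hvc : ∀ k, v ≠ c k := aux_not_range G c hc hv
  have huc : ∀ k, u ≠ c k := aux_not_range G c hc hu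
  have hvadj : ∀ k, G.Adj v (c k) ↔ k = i := aux_adj_iff G c hc.1 hv
  have huadj : ∀ k, G.Adj u (c k) ↔ k = i := aux_adj_iff G c hc.1 hu
  have enum : ∀ x : ZMod 3, x = 0 ∨ x = 1 ∨ x = 2 := by decide
  refine ⟨fun k : ZMod 3 => ![v, u, c i] k, ?_, ?_⟩
  · intro a b hab
    rcases enum a with rfl | rfl | rfl <;> rcases enum b with rfl | rfl | rfl <;>
      first
        | rfl
        | exact absurd hab hadj.ne
        | exact absurd hab.symm hadj.ne
        | exact absurd hab (hvc _)
        | exact absurd hab (huc _)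
        | exact absurd hab.symm (hvc _)
        | exact absurd hab.symm (huc _)
  · intro a b
    rcases enum a with rfl | rfl | rfl <;> rcases enum b with rfl | rfl | rfl <;>
      first
        | exact iff_of_false (fun h => G.loopless.irrefl _ h) (by decide)
        | exact iff_of_true hadj (by decide)
        | exact iff_of_true hadj.symm (by decide)
        | exact iff_of_true ((hvadj i).2 rfl) (by decide)
        | exact iff_of_true ((hvadj i).2 rfl).symm (by decide)
        | exact iff_of_true ((huadj i).2 rfl) (by decide)
        | exact iff_of_true ((huadj i).2 rfl).symm (by decide)

lemma aux_five {V : Type*} (G : SimpleGraph V)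
    (c : ZMod 7 → V) (hc : IsInducedCycle G 7 c)
    (v u : V) (i : ZMod 7)
    (hv : G.neighborSet v ∩ Set.range c = {c i})
    (hu : G.neighborSet u ∩ Set.range c = {c (i + 2)}) (hadj : G.Adj v u) :
    HasInducedCycle G 5 := by
  have hvc : ∀ k, v ≠ c k := aux_not_range G c hc hv
  have huc : ∀ k, u ≠ c k := aux_not_range G c hc hu
  have hvadj : ∀ k, G.Adj v (c k) ↔ k = i := aux_adj_iff G c hc.1 hv
  have huadj : ∀ k, G.Adj u (c k) ↔ k = i + 2 := aux_adj_iff G c hc.1 hu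
  have hcadj := hc.2
  have enum : ∀ x : ZMod 5, x = 0 ∨ x = 1 ∨ x = 2 ∨ x = 3 ∨ x = 4 := by decide
  refine ⟨fun k : ZMod 5 => ![v, c i, c (i+1), c (i+2), u] k, ?_, ?_⟩
  · intro a b hab
    rcases enum a with rfl | rfl | rfl | rfl | rfl <;> rcases enum b with rfl | rfl | rfl | rfl | rfl <;>
      first
        | rfl
        | exact absurd hab hadj.ne
        | exact absurd hab.symm hadj.ne
        | exact absurd hab (hvc _)
        | exact absurd hab (huc _)
        | exact absurd hab.symm (hvc _)
        | exact absurd hab.symm (huc _)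
        | exact absurd (hc.1 hab) (zne7 (by ring_nf; decide))
  · intro a b
    rcases enum a with rfl | rfl | rfl | rfl | rfl <;> rcases enum b with rfl | rfl | rfl | rfl | rfl <;>
      first
        | exact iff_of_false (fun h => G.loopless.irrefl _ h) (by decide)
        | exact iff_of_true hadj (by decide)
        | exact iff_of_true hadj.symm (by decide)
        | exact iff_of_true ((hvadj i).2 rfl) (by decide)
        | exact iff_of_true ((hvadj i).2 rfl).symm (by decide)
        | exact iff_of_true ((huadj (i+2)).2 rfl) (by decide)
        | exact iff_of_true ((huadj (i+2)).2 rfl).symm (by decide)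
        | exact iff_of_true ((hcadj i (i+1)).2 (Or.inr (by ring))) (by decide)
        | exact iff_of_true ((hcadj (i+1) i).2 (Or.inl (by ring))) (by decide)
        | exact iff_of_true ((hcadj (i+1) (i+2)).2 (Or.inr (by ring))) (by decide)
        | exact iff_of_true ((hcadj (i+2) (i+1)).2 (Or.inl (by ring))) (by decide)
        | exact iff_of_false (fun h => zne7 (by ring_nf; decide) ((hvadj _).1 h)) (by decide)
        | exact iff_of_false (fun h => zne7 (by ring_nf; decide) ((hvadj _).1 h.symm)) (by decide)
        | exact iff_of_false (fun h => zne7 (by ring_nf; decide) ((huadj _).1 h)) (by decide)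
        | exact iff_of_false (fun h => zne7 (by ring_nf; decide) ((huadj _).1 h.symm)) (by decide)
        | exact iff_of_false (fun h => ((hcadj i (i+2)).1 h).elim
            (fun h' => zne7 (by ring_nf; decide) h')
            (fun h' => zne7 (by ring_nf; decide) h')) (by decide)
        | exact iff_of_false (fun h => ((hcadj (i+2) i).1 h).elim
            (fun h' => zne7 (by ring_nf; decide) h')
            (fun h' => zne7 (by ring_nf; decide) h')) (by decide)

theorem stmt10 {V : Type*} [Fintype V] (G : SimpleGraph V)
    (h3 : ¬ HasInducedCycle G 3) (h5 : ¬ HasInducedCycle G 5)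
    (h9 : ¬ HasInducedCycle G 9)
    (c : ZMod 7 → V) (hc : IsInducedCycle G 7 c)
    (v u : V) (i j : ZMod 7)
    (hv : v ∈ Aset G c i) (hu : u ∈ Aset G c j) (hadj : G.Adj v u) :
    j ≠ i ∧ j ≠ i + 2 ∧ j ≠ i - 2 := by
  have hv' : G.neighborSet v ∩ Set.range c = {c i} := hv
  have hu' : G.neighborSet u ∩ Set.range c = {c j} := hu
  refine ⟨?_, ?_, ?_⟩
  · intro h
    rw [h] at hu'
    exact h3 (aux_three G c hc v u i hv' hu' hadj)
  · intro h
    rw [h] at hu'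
    exact h5 (aux_five G c hc v u i hv' hu' hadj)
  · intro h
    rw [h] at hu'
    have hv'' : G.neighborSet v ∩ Set.range c = {c ((i - 2) + 2)} := by
      rw [show (i : ZMod 7) - 2 + 2 = i by ring]; exact hv'
    exact h5 (aux_five G c hc u v (i - 2) hu' hv'' hadj.symm)
end

section
/- Let G be a graph with no induced C3 or C5, C = v1-...-v7 an induced 7-cycle. If v has N(v) ∩ V(C) = {v_i} and u is adjacent to v with N(u) ∩ V(C) = {v_{j-1}, v_{j+1}}, then j ∉ {i-1, i+1, i-3, i+3} (mod 7). -/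
open SimpleGraph

lemma mkC3 {V : Type*} (G : SimpleGraph V) (a b d : V)
    (hab : G.Adj a b) (hbd : G.Adj b d) (hda : G.Adj d a) :
    HasInducedCycle G 3 := by
  have hcases : ∀ x : ZMod 3, x = 0 ∨ x = 1 ∨ x = 2 := by decide
  refine ⟨fun k : ZMod 3 => if k = 0 then a else if k = 1 then b else d, ?_, ?_⟩
  · intro x y hxy
    rcases hcases x with rfl | rfl | rfl <;> rcases hcases y with rfl | rfl | rfl <;>
      simp_all (config := { decide := true }) <;>
      first
      | rfl
      | exact absurd hxy hab.ne
      | exact absurd hxy hbd.ne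
      | exact absurd hxy hda.ne
      | exact absurd hxy.symm hab.ne
      | exact absurd hxy.symm hbd.ne
      | exact absurd hxy.symm hda.ne
  · intro x y
    rcases hcases x with rfl | rfl | rfl <;> rcases hcases y with rfl | rfl | rfl <;>
      simp_all (config := { decide := true }) [hab.symm, hbd.symm, hda.symm]

lemma mkC5 {V : Type*} (G : SimpleGraph V) (a b d e f : V)
    (hab : G.Adj a b) (hbd : G.Adj b d) (hde : G.Adj d e) (hef : G.Adj e f)
    (hfa : G.Adj f a)
    (had : ¬ G.Adj a d) (hae : ¬ G.Adj a e) (hbe : ¬ G.Adj b e)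
    (hbf : ¬ G.Adj b f) (hdf : ¬ G.Adj d f)
    (nad : a ≠ d) (nae : a ≠ e) (nbe : b ≠ e) (nbf : b ≠ f) (ndf : d ≠ f) :
    HasInducedCycle G 5 := by
  have hcases : ∀ x : ZMod 5, x = 0 ∨ x = 1 ∨ x = 2 ∨ x = 3 ∨ x = 4 := by decide
  have had' : ¬ G.Adj d a := fun h => had h.symm
  have hae' : ¬ G.Adj e a := fun h => hae h.symm
  have hbe' : ¬ G.Adj e b := fun h => hbe h.symm
  have hbf' : ¬ G.Adj f b := fun h => hbf h.symm
  have hdf' : ¬ G.Adj f d := fun h => hdf h.symm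
  refine ⟨fun k : ZMod 5 =>
    if k = 0 then a else if k = 1 then b else if k = 2 then d else if k = 3 then e else f,
    ?_, ?_⟩
  · intro x y hxy
    rcases hcases x with rfl | rfl | rfl | rfl | rfl <;>
      rcases hcases y with rfl | rfl | rfl | rfl | rfl <;>
      simp_all (config := { decide := true }) <;>
      first
      | rfl
      | exact absurd hxy hab.ne
      | exact absurd hxy hbd.ne
      | exact absurd hxy hde.ne
      | exact absurd hxy hef.ne
      | exact absurd hxy hfa.ne
      | exact absurd hxy.symm hab.ne
      | exact absurd hxy.symm hbd.ne
      | exact absurd hxy.symm hde.ne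
      | exact absurd hxy.symm hef.ne
      | exact absurd hxy.symm hfa.ne
      | exact absurd hxy nad
      | exact absurd hxy nae
      | exact absurd hxy nbe
      | exact absurd hxy nbf
      | exact absurd hxy ndf
      | exact absurd hxy.symm nad
      | exact absurd hxy.symm nae
      | exact absurd hxy.symm nbe
      | exact absurd hxy.symm nbf
      | exact absurd hxy.symm ndf
  · intro x y
    rcases hcases x with rfl | rfl | rfl | rfl | rfl <;>
      rcases hcases y with rfl | rfl | rfl | rfl | rfl <;>
      simp_all (config := { decide := true }) [hab.symm, hbd.symm, hde.symm, hef.symm, hfa.symm]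

theorem stmt12 {V : Type*} [Fintype V] (G : SimpleGraph V)
    (h3 : ¬ HasInducedCycle G 3) (h5 : ¬ HasInducedCycle G 5)
    (c : ZMod 7 → V) (hc : IsInducedCycle G 7 c)
    (v u : V) (i j : ZMod 7)
    (hv : v ∈ Aset G c i) (hu : u ∈ Bset G c j) (hadj : G.Adj v u) :
    j ≠ i + 1 ∧ j ≠ i - 1 ∧ j ≠ i + 3 ∧ j ≠ i - 3 := by
  obtain ⟨hinj, hcyc⟩ := hc
  have hAdjv : ∀ k, G.Adj v (c k) ↔ k = i := by
    intro k
    have h := Set.ext_iff.mp hv (c k)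
    simp only [Set.mem_inter_iff, SimpleGraph.mem_neighborSet, Set.mem_range,
      Set.mem_singleton_iff] at h
    constructor
    · intro ha; exact hinj (h.mp ⟨ha, k, rfl⟩)
    · rintro rfl; exact (h.mpr rfl).1
  have hAdju : ∀ k, G.Adj u (c k) ↔ (k = j - 1 ∨ k = j + 1) := by
    intro k
    have h := Set.ext_iff.mp hu (c k)
    simp only [Set.mem_inter_iff, SimpleGraph.mem_neighborSet, Set.mem_range,
      Set.mem_insert_iff, Set.mem_singleton_iff] at h
    constructor
    · intro ha
      rcases h.mp ⟨ha, k, rfl⟩ with h' | h'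
      · exact Or.inl (hinj h')
      · exact Or.inr (hinj h')
    · rintro (rfl | rfl)
      · exact (h.mpr (Or.inl rfl)).1
      · exact (h.mpr (Or.inr rfl)).1
  refine ⟨?_, ?_, ?_, ?_⟩
  · -- j = i + 1 : triangle v, u, c i
    rintro rfl
    exact h3 (mkC3 G v u (c i) hadj
      ((hAdju i).mpr (Or.inl (by ring)))
      ((hAdjv i).mpr rfl).symm)
  · -- j = i - 1 : triangle v, u, c i
    rintro rfl
    exact h3 (mkC3 G v u (c i) hadj
      ((hAdju i).mpr (Or.inr (by ring)))
      ((hAdjv i).mpr rfl).symm)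
  · -- j = i + 3 : C5 on v, c i, c (i+1), c (i+2), u
    rintro rfl
    refine h5 (mkC5 G v (c i) (c (i+1)) (c (i+2)) u
      ((hAdjv i).mpr rfl)
      ((hcyc i (i+1)).mpr (Or.inr rfl))
      ((hcyc (i+1) (i+2)).mpr (Or.inr (by ring)))
      ((hAdju (i+2)).mpr (Or.inl (by ring))).symm
      hadj.symm
      ?_ ?_ ?_ ?_ ?_ ?_ ?_ ?_ ?_ ?_)
    · intro h
      exact absurd (show (1 : ZMod 7) = 0 by linear_combination (hAdjv (i+1)).mp h) (by decide)
    · intro h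
      exact absurd (show (2 : ZMod 7) = 0 by linear_combination (hAdjv (i+2)).mp h) (by decide)
    · intro h
      rcases (hcyc i (i+2)).mp h with h' | h'
      · exact absurd (show (0 : ZMod 7) = 3 by linear_combination h') (by decide)
      · exact absurd (show (2 : ZMod 7) = 1 by linear_combination h') (by decide)
    · intro h
      rcases (hAdju i).mp h.symm with h' | h'
      · exact absurd (show (0 : ZMod 7) = 2 by linear_combination h') (by decide)
      · exact absurd (show (0 : ZMod 7) = 4 by linear_combination h') (by decide)
    · intro h
      rcases (hAdju (i+1)).mp h.symm with h' | h'
      · exact absurd (show (1 : ZMod 7) = 2 by linear_combination h') (by decide)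
      · exact absurd (show (1 : ZMod 7) = 4 by linear_combination h') (by decide)
    · intro h
      have hA : G.Adj v (c (i+2)) := by rw [h]; exact (hcyc (i+1) (i+2)).mpr (Or.inr (by ring))
      exact absurd (show (2 : ZMod 7) = 0 by linear_combination (hAdjv (i+2)).mp hA) (by decide)
    · intro h
      have hA : G.Adj v (c (i+1)) := by rw [h]; exact (hcyc (i+2) (i+1)).mpr (Or.inl (by ring))
      exact absurd (show (1 : ZMod 7) = 0 by linear_combination (hAdjv (i+1)).mp hA) (by decide)
    · intro h
      exact absurd (show (0 : ZMod 7) = 2 by linear_combination hinj h) (by decide)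
    · intro h
      have hA : G.Adj u (c (i+1)) := by rw [← h]; exact (hcyc i (i+1)).mpr (Or.inr rfl)
      rcases (hAdju (i+1)).mp hA with h' | h'
      · exact absurd (show (1 : ZMod 7) = 2 by linear_combination h') (by decide)
      · exact absurd (show (1 : ZMod 7) = 4 by linear_combination h') (by decide)
    · intro h
      have hA : G.Adj u (c i) := by rw [← h]; exact (hcyc (i+1) i).mpr (Or.inl rfl)
      rcases (hAdju i).mp hA with h' | h'
      · exact absurd (show (0 : ZMod 7) = 2 by linear_combination h') (by decide)
      · exact absurd (show (0 : ZMod 7) = 4 by linear_combination h') (by decide)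
  · -- j = i - 3 : C5 on v, c i, c (i-1), c (i-2), u
    rintro rfl
    refine h5 (mkC5 G v (c i) (c (i-1)) (c (i-2)) u
      ((hAdjv i).mpr rfl)
      ((hcyc i (i-1)).mpr (Or.inl (by ring)))
      ((hcyc (i-1) (i-2)).mpr (Or.inl (by ring)))
      ((hAdju (i-2)).mpr (Or.inr (by ring))).symm
      hadj.symm
      ?_ ?_ ?_ ?_ ?_ ?_ ?_ ?_ ?_ ?_)
    · intro h
      exact absurd (show (0 : ZMod 7) = 1 by linear_combination (hAdjv (i-1)).mp h) (by decide)
    · intro h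
      exact absurd (show (0 : ZMod 7) = 2 by linear_combination (hAdjv (i-2)).mp h) (by decide)
    · intro h
      rcases (hcyc i (i-2)).mp h with h' | h'
      · exact absurd (show (1 : ZMod 7) = 0 by linear_combination h') (by decide)
      · exact absurd (show (0 : ZMod 7) = 3 by linear_combination h') (by decide)
    · intro h
      rcases (hAdju i).mp h.symm with h' | h'
      · exact absurd (show (4 : ZMod 7) = 0 by linear_combination h') (by decide)
      · exact absurd (show (2 : ZMod 7) = 0 by linear_combination h') (by decide)
    · intro h
      rcases (hAdju (i-1)).mp h.symm with h' | h'
      · exact absurd (show (3 : ZMod 7) = 0 by linear_combination h') (by decide)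
      · exact absurd (show (1 : ZMod 7) = 0 by linear_combination h') (by decide)
    · intro h
      have hA : G.Adj v (c (i-2)) := by rw [h]; exact (hcyc (i-1) (i-2)).mpr (Or.inl (by ring))
      exact absurd (show (0 : ZMod 7) = 2 by linear_combination (hAdjv (i-2)).mp hA) (by decide)
    · intro h
      have hA : G.Adj v (c (i-1)) := by rw [h]; exact (hcyc (i-2) (i-1)).mpr (Or.inr (by ring))
      exact absurd (show (0 : ZMod 7) = 1 by linear_combination (hAdjv (i-1)).mp hA) (by decide)
    · intro h
      exact absurd (show (0 : ZMod 7) = 2 by linear_combination - hinj h) (by decide)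
    · intro h
      have hA : G.Adj u (c (i-1)) := by rw [← h]; exact (hcyc i (i-1)).mpr (Or.inl (by ring))
      rcases (hAdju (i-1)).mp hA with h' | h'
      · exact absurd (show (3 : ZMod 7) = 0 by linear_combination h') (by decide)
      · exact absurd (show (1 : ZMod 7) = 0 by linear_combination h') (by decide)
    · intro h
      have hA : G.Adj u (c i) := by rw [← h]; exact (hcyc (i-1) i).mpr (Or.inr (by ring))
      rcases (hAdju i).mp hA with h' | h'
      · exact absurd (show (4 : ZMod 7) = 0 by linear_combination h') (by decide)
      · exact absurd (show (2 : ZMod 7) = 0 by linear_combination h') (by decide)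
end
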